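/- arXiv:2010.02730 — 10 statements merged into one kernel-verified Lean document; each statement's English description precedes it below -/
import Mathlib

section
/- Let n ∈ ℕ with n ≥ 1, let p, w : Fin n → ℕ, let P, W ∈ ℕ, and let pₘₐₓ = maxᵢ p(i). Then the following are equivalent: (i) there exists S ⊆ Fin n with Σ_{i∈S} w(i) ≤ W and Σ_{i∈S} p(i) ≥ P; (ii) there exist γᵃ, γᵇ : Fin n → {0,1} with Σᵢ γᵃ(i) + Σᵢ γᵇ(i) ≤ n such that Σ_{i : γᵃ(i)=0} (pₘₐₓ − p(i)) + pₘₐₓ · |{i : γᵇ(i)=0}| + P ≤ n·pₘₐₓ and Σ_{i : γᵃ(i)=0} w(i) ≤ W. -/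
theorem stmt3 (n : ℕ) (hn : 1 ≤ n) (p w : Fin n → ℕ) (P W : ℕ)
    (pmax : ℕ) (hpmax : pmax = Finset.univ.sup p) :
    (∃ S : Finset (Fin n), ∑ i ∈ S, w i ≤ W ∧ P ≤ ∑ i ∈ S, p i) ↔
    (∃ γa γb : Fin n → ℕ, (∀ i, γa i ≤ 1) ∧ (∀ i, γb i ≤ 1) ∧
      (∑ i, γa i) + (∑ i, γb i) ≤ n ∧
      (∑ i ∈ Finset.univ.filter (fun i => γa i = 0), (pmax - p i)) +
        pmax * (Finset.univ.filter (fun i => γb i = 0)).card + P ≤ n * pmax ∧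
      ∑ i ∈ Finset.univ.filter (fun i => γa i = 0), w i ≤ W) := by
  have hple : ∀ i, p i ≤ pmax := fun i => hpmax ▸ Finset.le_sup (Finset.mem_univ i)
  have key : ∀ S : Finset (Fin n),
      (∑ i ∈ S, (pmax - p i)) + (∑ i ∈ S, p i) = S.card * pmax := by
    intro S
    rw [← Finset.sum_add_distrib]
    have : ∀ i ∈ S, (pmax - p i) + p i = pmax := fun i _ => by
      have := hple i; omega
    rw [Finset.sum_congr rfl this, Finset.sum_const, smul_eq_mul]
  constructor
  · rintro ⟨S, hw, hp⟩
    refine ⟨fun i => if i ∈ S then 0 else 1, fun i => if i ∈ S then 1 else 0,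
      fun i => by dsimp only; split <;> simp, fun i => by dsimp only; split <;> simp, ?_, ?_, ?_⟩
    · have : (∑ i, if i ∈ S then (0:ℕ) else 1) + (∑ i, if i ∈ S then (1:ℕ) else 0)
          = ∑ i : Fin n, 1 := by
        rw [← Finset.sum_add_distrib]
        apply Finset.sum_congr rfl
        intro i _; split <;> simp
      simp only [this]
      simp
    · have hfa : Finset.univ.filter (fun i => (if i ∈ S then (0:ℕ) else 1) = 0) = S := by
        ext i; simp
      have hfb : Finset.univ.filter (fun i => (if i ∈ S then (1:ℕ) else 0) = 0) = Sᶜ := by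
        ext i; simp
      rw [hfa, hfb]
      have hc : Sᶜ.card = n - S.card := by
        rw [Finset.card_compl]; simp
      have hcard : S.card ≤ n := by
        have := Finset.card_le_univ S; simpa using this
      rw [hc]
      have hk := key S
      have h3 : pmax * (n - S.card) + S.card * pmax = n * pmax := by
        rw [mul_comm S.card pmax, ← Nat.mul_add, Nat.sub_add_cancel hcard, mul_comm]
      linarith [hp, hk, h3]
    · have hfa : Finset.univ.filter (fun i => (if i ∈ S then (0:ℕ) else 1) = 0) = S := by
        ext i; simp
      rw [hfa]; exact hw
  · rintro ⟨γa, γb, ha, hb, hsum, hmain, hw⟩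
    set S := Finset.univ.filter (fun i => γa i = 0) with hS
    set T := Finset.univ.filter (fun i => γb i = 0) with hT
    refine ⟨S, hw, ?_⟩
    have hAa : ∑ i, γa i = n - S.card := by
      have : ∑ i, γa i = ∑ i ∈ Finset.univ.filter (fun i => ¬ γa i = 0), γa i := by
        rw [Finset.sum_filter_of_ne]; intro i _ h; omega
      rw [this]
      have : ∀ i ∈ Finset.univ.filter (fun i => ¬ γa i = 0), γa i = 1 := by
        intro i hi; simp at hi; have := ha i; omega
      rw [Finset.sum_congr rfl this, Finset.sum_const, smul_eq_mul, mul_one,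
        Finset.filter_not, Finset.card_sdiff_of_subset (Finset.filter_subset _ _)]
      simp [hS]
    have hBb : ∑ i, γb i = n - T.card := by
      have : ∑ i, γb i = ∑ i ∈ Finset.univ.filter (fun i => ¬ γb i = 0), γb i := by
        rw [Finset.sum_filter_of_ne]; intro i _ h; omega
      rw [this]
      have : ∀ i ∈ Finset.univ.filter (fun i => ¬ γb i = 0), γb i = 1 := by
        intro i hi; simp at hi; have := hb i; omega
      rw [Finset.sum_congr rfl this, Finset.sum_const, smul_eq_mul, mul_one,
        Finset.filter_not, Finset.card_sdiff_of_subset (Finset.filter_subset _ _)]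
      simp [hT]
    have hScard : S.card ≤ n := by have := Finset.card_le_univ S; simpa using this
    have hTcard : T.card ≤ n := by have := Finset.card_le_univ T; simpa using this
    have hAB : n ≤ S.card + T.card := by omega
    have hk := key S
    -- hmain : ∑_{S}(pmax - p) + pmax * T.card + P ≤ n * pmax
    have hmul : n * pmax ≤ S.card * pmax + T.card * pmax := by
      rw [← Nat.add_mul]; exact Nat.mul_le_mul_right pmax hAB
    linarith [hmain, hk, hmul, mul_comm pmax T.card]
end

section
/- Let n ∈ ℕ with n ≥ 1, let p, w : Fin n → ℕ, let P, W ∈ ℕ, and let pₘₐₓ = maxᵢ p(i). Suppose S ⊆ Fin n satisfies Σ_{i∈S} w(i) ≤ W and Σ_{i∈S} p(i) ≥ P. Define γᵃ(i) = 1 if i ∉ S and 0 otherwise, and γᵇ(i) = 1 if i ∈ S and 0 otherwise. Then Σᵢ γᵃ(i) + Σᵢ γᵇ(i) = n, Σ_{i : γᵃ(i)=0} (pₘₐₓ − p(i)) + pₘₐₓ · |{i : γᵇ(i)=0}| + P ≤ n·pₘₐₓ, and Σ_{i : γᵃ(i)=0} w(i) ≤ W. -/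
theorem stmt4 (n : ℕ) (hn : 1 ≤ n) (p w : Fin n → ℕ) (P W : ℕ)
    (pmax : ℕ) (hpmax : pmax = Finset.univ.sup p)
    (S : Finset (Fin n)) (hw : ∑ i ∈ S, w i ≤ W) (hp : P ≤ ∑ i ∈ S, p i)
    (γa γb : Fin n → ℕ)
    (hγa : γa = fun i => if i ∈ S then 0 else 1)
    (hγb : γb = fun i => if i ∈ S then 1 else 0) :
    (∑ i, γa i) + (∑ i, γb i) = n ∧
    (∑ i ∈ Finset.univ.filter (fun i => γa i = 0), (pmax - p i)) +
      pmax * (Finset.univ.filter (fun i => γb i = 0)).card + P ≤ n * pmax ∧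
    ∑ i ∈ Finset.univ.filter (fun i => γa i = 0), w i ≤ W := by
  subst hγa hγb
  have hfa : (Finset.univ.filter (fun i : Fin n =>
      (if i ∈ S then 0 else 1 : ℕ) = 0)) = S := by
    ext i; by_cases h : i ∈ S <;> simp [h]
  have hfb : (Finset.univ.filter (fun i : Fin n =>
      (if i ∈ S then 1 else 0 : ℕ) = 0)) = Sᶜ := by
    ext i; by_cases h : i ∈ S <;> simp [h]
  refine ⟨?_, ?_, ?_⟩
  · have : ∀ i : Fin n, (if i ∈ S then (0:ℕ) else 1) + (if i ∈ S then 1 else 0) = 1 := by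
      intro i; by_cases h : i ∈ S <;> simp [h]
    rw [← Finset.sum_add_distrib]
    simp [this]
  · rw [hfa, hfb]
    have hle : ∀ i ∈ S, p i ≤ pmax := by
      intro i _; rw [hpmax]; exact Finset.le_sup (Finset.mem_univ i)
    have h1 : ∑ i ∈ S, (pmax - p i) + ∑ i ∈ S, p i = S.card * pmax := by
      rw [← Finset.sum_add_distrib]
      rw [Finset.sum_congr rfl (fun i hi => Nat.sub_add_cancel (hle i hi))]
      simp [mul_comm]
    have hcard : Sᶜ.card = n - S.card := by
      simp [Finset.card_compl]
    have hSn : S.card ≤ n := by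
      simpa using Finset.card_le_card (Finset.subset_univ S)
    rw [hcard]
    have hps : ∑ i ∈ S, p i ≤ S.card * pmax := by
      calc ∑ i ∈ S, p i ≤ ∑ _i ∈ S, pmax := Finset.sum_le_sum hle
        _ = S.card * pmax := by simp [mul_comm]
    have h3 : S.card * pmax ≤ n * pmax := Nat.mul_le_mul_right pmax hSn
    have h2 : pmax * (n - S.card) + S.card * pmax = n * pmax := by
      rw [Nat.mul_sub pmax n S.card, mul_comm pmax n, mul_comm pmax S.card]
      omega
    omega
  · rw [hfa]; exact hw
end

section
/- Let n ∈ ℕ with n ≥ 1, let p, w : Fin n → ℕ, let P, W ∈ ℕ, and let pₘₐₓ = maxᵢ p(i). Suppose γᵃ, γᵇ : Fin n → {0,1} satisfy Σᵢ γᵃ(i) + Σᵢ γᵇ(i) ≤ n, Σ_{i : γᵃ(i)=0} (pₘₐₓ − p(i)) + pₘₐₓ · |{i : γᵇ(i)=0}| + P ≤ n·pₘₐₓ, and Σ_{i : γᵃ(i)=0} w(i) ≤ W. Then the set S = {i : γᵃ(i) = 0} satisfies Σ_{i∈S} w(i) ≤ W and Σ_{i∈S} p(i) ≥ P. -/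
theorem stmt5 (n : ℕ) (hn : 1 ≤ n) (p w : Fin n → ℕ) (P W : ℕ)
    (pmax : ℕ) (hpmax : pmax = Finset.univ.sup p)
    (γa γb : Fin n → ℕ) (hγa : ∀ i, γa i ≤ 1) (hγb : ∀ i, γb i ≤ 1)
    (hbudget : (∑ i, γa i) + (∑ i, γb i) ≤ n)
    (hK1 : (∑ i ∈ Finset.univ.filter (fun i => γa i = 0), (pmax - p i)) +
      pmax * (Finset.univ.filter (fun i => γb i = 0)).card + P ≤ n * pmax)
    (hK2 : ∑ i ∈ Finset.univ.filter (fun i => γa i = 0), w i ≤ W)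
    (S : Finset (Fin n)) (hS : S = Finset.univ.filter (fun i => γa i = 0)) :
    ∑ i ∈ S, w i ≤ W ∧ P ≤ ∑ i ∈ S, p i := by
  subst hS
  refine ⟨hK2, ?_⟩
  set A := Finset.univ.filter (fun i => γa i = 0) with hA
  set B := Finset.univ.filter (fun i => γb i = 0) with hB
  have hcardA : n ≤ (∑ i, γa i) + A.card := by
    have h1 : A.card = ∑ i, (if γa i = 0 then 1 else 0) := by
      rw [Finset.card_eq_sum_ones, hA, Finset.sum_filter]
    rw [h1, ← Finset.sum_add_distrib]
    calc n = ∑ _i : Fin n, 1 := by simp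
    _ ≤ _ := Finset.sum_le_sum fun i _ => by have := hγa i; split <;> omega
  have hcardB : n ≤ (∑ i, γb i) + B.card := by
    have h1 : B.card = ∑ i, (if γb i = 0 then 1 else 0) := by
      rw [Finset.card_eq_sum_ones, hB, Finset.sum_filter]
    rw [h1, ← Finset.sum_add_distrib]
    calc n = ∑ _i : Fin n, 1 := by simp
    _ ≤ _ := Finset.sum_le_sum fun i _ => by have := hγb i; split <;> omega
  have hAB : n ≤ A.card + B.card := by omega
  have hple : ∀ i, p i ≤ pmax := fun i => hpmax ▸ Finset.le_sup (Finset.mem_univ i)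
  have hsum : (∑ i ∈ A, (pmax - p i)) + ∑ i ∈ A, p i = A.card * pmax := by
    rw [← Finset.sum_add_distrib]
    have : ∀ i ∈ A, pmax - p i + p i = pmax := fun i _ => Nat.sub_add_cancel (hple i)
    rw [Finset.sum_congr rfl this, Finset.sum_const, smul_eq_mul]
  have key : A.card * pmax + pmax * B.card + P ≤ n * pmax + ∑ i ∈ A, p i := by omega
  have h2 : n * pmax ≤ A.card * pmax + pmax * B.card := by
    calc n * pmax ≤ (A.card + B.card) * pmax := Nat.mul_le_mul_right _ hAB
    _ = A.card * pmax + pmax * B.card := by ring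
  linarith
end

section
/- For every n ∈ ℕ with n ≥ 1, there exist N = (9n² − 7n)/2, coefficients p¹, p² : Fin N → ℝ with p¹(i) ≥ 0 and p²(i) ≥ 0 for all i, weights w : Fin N → ℝ with w(i) ≥ 0, and a capacity b ≥ 0, such that the function f : ℝ → ℝ defined by f(q) = max { Σᵢ (p¹(i)·q + p²(i))·x(i) : x : Fin N → {0,1}, Σᵢ w(i)·x(i) ≤ b } has exactly 2ⁿ − 1 breakpoints in the open interval (−2ⁿ, 2ⁿ), where q₀ is called a breakpoint of f if there is no open interval containing q₀ on which f agrees with an affine function. -/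
/-!
Encode `m < 2 ^ n` by a set `B` of bit items `k`, each with profit `τ (2 ^ k q + 4 ^ k / 2)` on top
of its weight. For every pair `k < l` of bits add a filler and a penalty item of weight `6 ^ e`,
where `e` numbers the pair, and let the bit items carry the weights `6 ^ e` of their pairs. With
capacity `b = ∑ e, 2 * 6 ^ e`, a selection of full weight has every base-6 digit equal to `2`, so a
pair with neither bit in `B` forces the penalty `τ 2 ^ (k + l)`; a selection of smaller weight loses
at least `1`, more than the total penalty `τ ∑ 2 ^ (k + l)` for `τ = 4⁻ⁿ`. Since profits equal
weights up to these `τ`-terms, completing the square in `m` gives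
`f q = b + τ ((4 ^ n - 1) / 6 + max_{m < 2 ^ n} (m q - (2 ^ n - 1 - m) ^ 2 / 2))`,
an upper envelope of lines of consecutive slopes, with a kink between any two neighbouring lines.
The `n ^ 2` items fit into `(9 n ^ 2 - 7 n) / 2` slots; the rest are null items.
-/

/-- The optimal value function of the parametric cost knapsack problem:
`f q` is the maximum of `∑ i (p1 i * q + p2 i) * x i` over binary vectors `x`
satisfying the weight constraint. Since the set of attained values is finite and
nonempty (`x = 0` is feasible), its supremum is its maximum. -/
noncomputable def paramKnapVal (N : ℕ) (p1 p2 w : Fin N → ℝ) (b : ℝ) (q : ℝ) : ℝ :=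
  sSup {v : ℝ | ∃ x : Fin N → ℝ, (∀ i, x i = 0 ∨ x i = 1) ∧
    (∑ i, w i * x i) ≤ b ∧ v = ∑ i, (p1 i * q + p2 i) * x i}

/-- `q0` is a breakpoint of `f` if `f` agrees with no affine function on any
open set containing `q0`. -/
def IsBreakpoint (f : ℝ → ℝ) (q0 : ℝ) : Prop :=
  ¬ ∃ a c : ℝ, ∃ s : Set ℝ, IsOpen s ∧ q0 ∈ s ∧ ∀ q ∈ s, f q = a * q + c

open Finset Filter Topology Function

theorem isBreakpoint_iff {f : ℝ → ℝ} {t : ℝ} :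
    IsBreakpoint f t ↔ ¬ ∃ a c : ℝ, ∀ᶠ s in 𝓝 t, f s = a * s + c := by
  simp only [IsBreakpoint, eventually_nhds_iff]
  exact not_congr <| exists₂_congr fun a c => exists_congr fun s => by tauto

theorem isBreakpoint_const_mul_add_iff {f : ℝ → ℝ} {a c t : ℝ} (ha : a ≠ 0) :
    IsBreakpoint (fun s => a * f s + c) t ↔ IsBreakpoint f t := by
  simp only [isBreakpoint_iff, not_iff_not]
  constructor
  · rintro ⟨α, β, h⟩
    refine ⟨α / a, (β - c) / a, h.mono fun s hs => ?_⟩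
    field_simp
    linarith
  · rintro ⟨α, β, h⟩
    exact ⟨a * α, a * β + c, h.mono fun s hs => by rw [hs]; ring⟩

theorem isBreakpoint_of_two_mul_lt {f : ℝ → ℝ} {t δ : ℝ} (hδ : 0 < δ)
    (h : ∀ η, 0 < η → η ≤ δ → 2 * f t < f (t + η) + f (t - η)) : IsBreakpoint f t := by
  rw [isBreakpoint_iff]
  rintro ⟨a, c, hf⟩
  have hplus : ∀ᶠ η in 𝓝[>] (0 : ℝ), f (t + η) = a * (t + η) + c := nhdsWithin_le_nhds <|
    (continuous_const.add continuous_id).tendsto' 0 t (add_zero t) |>.eventually hf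
  have hminus : ∀ᶠ η in 𝓝[>] (0 : ℝ), f (t - η) = a * (t - η) + c := nhdsWithin_le_nhds <|
    (continuous_const.sub continuous_id).tendsto' 0 t (sub_zero t) |>.eventually hf
  have hsmall : ∀ᶠ η in 𝓝[>] (0 : ℝ), η ∈ Set.Ioc 0 δ := Ioc_mem_nhdsGT hδ
  obtain ⟨η, ⟨hp, hm⟩, hη0, hηδ⟩ := ((hplus.and hminus).and hsmall).exists
  have := h η hη0 hηδ
  rw [hp, hm, hf.self_of_nhds] at this
  linarith

noncomputable def quadLine (M m : ℕ) (t : ℝ) : ℝ := m * t - ((M : ℝ) - m) ^ 2 / 2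

noncomputable def quadEnvelope (M : ℕ) (t : ℝ) : ℝ :=
  (range (M + 1)).sup' nonempty_range_add_one fun m => quadLine M m t

section QuadEnvelope

variable {M : ℕ}

theorem quadLine_sub_quadLine (m j : ℕ) (t : ℝ) :
    quadLine M m t - quadLine M j t = ((m : ℝ) - j) * (t + M - ((m : ℝ) + j) / 2) := by
  unfold quadLine
  ring

theorem quadEnvelope_eq_quadLine {m : ℕ} {t : ℝ} (hm : m ≤ M)
    (hlo : 1 ≤ m → (m : ℝ) - M - 1 / 2 ≤ t) (hhi : m < M → t ≤ (m : ℝ) - M + 1 / 2) :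
    quadEnvelope M t = quadLine M m t := by
  refine le_antisymm (sup'_le _ _ fun j hj => sub_nonneg.1 ?_)
    (le_sup' (fun j => quadLine M j t) (mem_range_succ_iff.2 hm))
  rw [mem_range] at hj
  rw [quadLine_sub_quadLine]
  rcases lt_trichotomy j m with hjm | rfl | hmj
  · have : (j : ℝ) + 1 ≤ m := by exact_mod_cast hjm
    have := hlo (by omega)
    exact mul_nonneg (by linarith) (by linarith)
  · simp
  · have : (m : ℝ) + 1 ≤ j := by exact_mod_cast hmj
    have := hhi (by omega)
    exact mul_nonneg_of_nonpos_of_nonpos (by linarith) (by linarith)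

theorem exists_quadEnvelope_cell {t : ℝ} (ht : ∀ j < M, t ≠ (j : ℝ) - M + 1 / 2) :
    ∃ m ≤ M, (1 ≤ m → (m : ℝ) - M - 1 / 2 < t) ∧ (m < M → t < (m : ℝ) - M + 1 / 2) := by
  set k := ⌊t + M + 1 / 2⌋₊
  refine ⟨min k M, min_le_right _ _, fun h1 => ?_, fun h2 => ?_⟩
  · obtain ⟨j, hj⟩ : ∃ j, min k M = j + 1 := Nat.exists_eq_add_of_le' h1
    have hk : 1 ≤ k := h1.trans (min_le_left _ _)
    have hfloor := Nat.floor_le ((Nat.one_le_floor_iff _).1 hk |>.trans' zero_le_one)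
    have hmin : ((min k M : ℕ) : ℝ) ≤ k := by exact_mod_cast min_le_left k M
    refine lt_of_le_of_ne (by linarith) fun h => ht j (by omega) ?_
    rw [hj] at h
    push_cast at h
    linarith
  · rw [min_eq_left (by omega)]
    linarith [Nat.lt_floor_add_one (t + M + 1 / 2)]

theorem isBreakpoint_quadEnvelope {j : ℕ} (hj : j < M) :
    IsBreakpoint (quadEnvelope M) ((j : ℝ) - M + 1 / 2) := by
  refine isBreakpoint_of_two_mul_lt one_pos fun η hη0 hη1 => ?_
  have hj1 : ((j + 1 : ℕ) : ℝ) = j + 1 := by push_cast; ring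
  rw [quadEnvelope_eq_quadLine (m := j) hj.le (fun _ => by linarith) (fun _ => le_rfl),
    quadEnvelope_eq_quadLine (m := j + 1) hj (fun _ => by rw [hj1]; linarith)
      (fun _ => by rw [hj1]; linarith),
    quadEnvelope_eq_quadLine (m := j) hj.le (fun _ => by linarith) (fun _ => by linarith),
    quadLine, quadLine, quadLine, hj1]
  linear_combination hη0

theorem not_isBreakpoint_quadEnvelope {t : ℝ} (ht : ∀ j < M, t ≠ (j : ℝ) - M + 1 / 2) :
    ¬ IsBreakpoint (quadEnvelope M) t := by
  obtain ⟨m, hm, hlo, hhi⟩ := exists_quadEnvelope_cell ht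
  rw [isBreakpoint_iff, not_not]
  refine ⟨m, -((M : ℝ) - m) ^ 2 / 2, ?_⟩
  have hlo' := eventually_imp_distrib_left.2 fun h => eventually_gt_nhds (hlo h)
  have hhi' := eventually_imp_distrib_left.2 fun h => eventually_lt_nhds (hhi h)
  filter_upwards [hlo', hhi'] with s hs1 hs2
  rw [quadEnvelope_eq_quadLine hm (fun h => (hs1 h).le) (fun h => (hs2 h).le), quadLine]
  ring

theorem setOf_isBreakpoint_quadEnvelope :
    {t | IsBreakpoint (quadEnvelope M) t} = (fun j : ℕ => (j : ℝ) - M + 1 / 2) '' Set.Iio M := by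
  ext t
  constructor
  · intro ht
    by_contra h
    exact not_isBreakpoint_quadEnvelope (fun j hj hjt => h ⟨j, hj, hjt.symm⟩) ht
  · rintro ⟨j, hj, rfl⟩
    exact isBreakpoint_quadEnvelope hj

theorem ncard_setOf_isBreakpoint_quadEnvelope :
    {t | IsBreakpoint (quadEnvelope M) t}.ncard = M := by
  rw [setOf_isBreakpoint_quadEnvelope, Set.ncard_image_of_injective _ fun i j h => by simpa using h,
    ← coe_range, Set.ncard_coe_finset, card_range]

theorem mem_Ioo_of_isBreakpoint_quadEnvelope {t : ℝ} (ht : IsBreakpoint (quadEnvelope M) t) :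
    t ∈ Set.Ioo (-((M : ℝ) + 1)) (M + 1) := by
  obtain ⟨j, hj, rfl⟩ := (Set.ext_iff.1 setOf_isBreakpoint_quadEnvelope t).1 ht
  have hjM : (j : ℝ) + 1 ≤ M := by exact_mod_cast hj
  constructor <;> linarith [(Nat.cast_nonneg j : (0 : ℝ) ≤ j)]

end QuadEnvelope

theorem eq_of_sum_mul_pow_eq {ι : Type*} [Fintype ι] {K β : ℕ} (e : ι ≃ Fin K) {c d : ι → ℕ}
    (hc : ∀ i, c i < β) (hd : ∀ i, d i < β)
    (h : ∑ i, c i * β ^ (e i : ℕ) = ∑ i, d i * β ^ (e i : ℕ)) : c = d := by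
  let c' : Fin K → Fin β := fun k => ⟨c (e.symm k), hc _⟩
  let d' : Fin K → Fin β := fun k => ⟨d (e.symm k), hd _⟩
  have h' : finFunctionFinEquiv c' = finFunctionFinEquiv d' := by
    ext
    simp only [finFunctionFinEquiv_apply, c', d']
    rw [← e.symm.sum_comp, ← e.symm.sum_comp] at h
    simpa using h
  funext i
  simpa [c', d'] using congrArg (fun f => (f (e i) : ℕ)) (finFunctionFinEquiv.injective h')

theorem two_mul_sum_lt_pairs_mul {α R : Type*} [Fintype α] [LinearOrder α] [CommRing R]
    (g : α → R) :
    2 * ∑ p : {p : α × α // p.1 < p.2}, g p.1.1 * g p.1.2 = (∑ a, g a) ^ 2 - ∑ a, g a ^ 2 := by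
  have hlt : ∑ p : {p : α × α // p.1 < p.2}, g p.1.1 * g p.1.2 =
      ∑ p : α × α, if p.1 < p.2 then g p.1 * g p.2 else 0 := by
    rw [← sum_filter]
    exact (sum_subtype {p : α × α | p.1 < p.2} (by simp) fun p => g p.1 * g p.2).symm
  have hgt : ∑ p : α × α, (if p.2 < p.1 then g p.1 * g p.2 else 0) =
      ∑ p : α × α, if p.1 < p.2 then g p.1 * g p.2 else 0 :=
    Fintype.sum_equiv (Equiv.prodComm α α) _ _ fun p => by simp [mul_comm]
  have hdiag : ∑ p : α × α, (if p.1 = p.2 then g p.1 * g p.2 else 0) = ∑ a, g a ^ 2 := by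
    simp [Fintype.sum_prod_type, sq]
  have hsplit : ∀ p : α × α, g p.1 * g p.2 = (if p.1 < p.2 then g p.1 * g p.2 else 0) +
      (if p.2 < p.1 then g p.1 * g p.2 else 0) + (if p.1 = p.2 then g p.1 * g p.2 else 0) := by
    intro p
    rcases lt_trichotomy p.1 p.2 with h | h | h
    · simp [h, h.not_gt, h.ne]
    · simp [h]
    · simp [h, h.not_gt, h.ne']
  rw [sq, sum_mul_sum, ← Fintype.sum_prod_type', Fintype.sum_congr _ _ hsplit, sum_add_distrib,
    sum_add_distrib, hgt, hdiag, hlt]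
  ring

theorem cast_two_pow_sub_one (n : ℕ) : ((2 ^ n - 1 : ℕ) : ℝ) = 2 ^ n - 1 := by
  rw [Nat.cast_sub Nat.one_le_two_pow]
  push_cast
  ring

theorem sum_two_pow_lt {n : ℕ} (B : Finset (Fin n)) : ∑ k ∈ B, 2 ^ (k : ℕ) < 2 ^ n := by
  simpa using Nat.geomSum_lt le_rfl (s := B.map Fin.valEmbedding) (by simp)

theorem cast_sum_two_pow_add_sum_compl {n : ℕ} (B : Finset (Fin n)) :
    ((∑ k ∈ B, 2 ^ (k : ℕ) : ℕ) : ℝ) + ∑ k ∈ Bᶜ, (2 : ℝ) ^ (k : ℕ) = 2 ^ n - 1 := by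
  push_cast
  rw [sum_add_sum_compl, Fin.sum_univ_eq_sum_range (fun k => (2 : ℝ) ^ k),
    geom_sum_eq (by norm_num)]
  ring

theorem exists_finset_sum_two_pow_eq {n m : ℕ} (hm : m < 2 ^ n) :
    ∃ B : Finset (Fin n), ∑ k ∈ B, 2 ^ (k : ℕ) = m := by
  let B : Finset (Fin n) := {k | (k : ℕ) ∈ m.bitIndices}
  have hB : B.map Fin.valEmbedding = m.bitIndices.toFinset := by
    ext i
    simp only [Finset.mem_map, mem_filter, mem_univ, true_and, Fin.valEmbedding_apply,
      List.mem_toFinset, B]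
    refine ⟨fun ⟨k, hk, hki⟩ => hki ▸ hk, fun hi => ⟨⟨i, ?_⟩, hi, rfl⟩⟩
    exact (Nat.pow_lt_pow_iff_right one_lt_two).1
      ((Nat.two_pow_le_of_mem_bitIndices hi).trans_lt hm)
  refine ⟨B, ?_⟩
  rw [← sum_toFinset_bitIndices_two_pow m, ← hB, sum_map]
  rfl

theorem extend_mul_add_extend {ι κ : Type*} (e : ι ↪ κ) (p1 p2 : ι → ℝ) (q : ℝ) (k : κ) :
    extend e p1 0 k * q + extend e p2 0 k = extend e (fun i => p1 i * q + p2 i) 0 k := by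
  by_cases hk : ∃ i, e i = k
  · obtain ⟨i, rfl⟩ := hk
    simp only [e.injective.extend_apply]
  · simp only [extend_apply' _ _ _ hk, Pi.zero_apply, zero_mul, add_zero]

section Padding

variable {ι κ : Type*} [Fintype ι] [Fintype κ]

theorem sum_extend_mul_of_binary (e : ι ↪ κ) (c : ι → ℝ) {x : κ → ℝ}
    (hx : ∀ k, x k = 0 ∨ x k = 1) :
    ∑ k, extend e c 0 k * x k = ∑ i with x (e i) = 1, c i := by
  rw [sum_filter]
  refine (Fintype.sum_of_injective e e.injective _ _ (fun k hk => ?_) fun i => ?_).symm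
  · rw [extend_apply' _ _ _ hk, Pi.zero_apply, zero_mul]
  · rw [e.injective.extend_apply]
    rcases hx (e i) with h | h <;> simp [h]

theorem paramKnapVal_extend {N : ℕ} (e : ι ↪ Fin N) (p1 p2 w : ι → ℝ) (b q : ℝ) :
    paramKnapVal N (extend e p1 0) (extend e p2 0) (extend e w 0) b q =
      sSup ((fun S : Finset ι => ∑ i ∈ S, (p1 i * q + p2 i)) '' {S | ∑ i ∈ S, w i ≤ b}) := by
  classical
  unfold paramKnapVal
  simp_rw [extend_mul_add_extend]
  congr 1
  ext v
  constructor
  · rintro ⟨x, hx, hw, rfl⟩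
    refine ⟨({i | x (e i) = 1} : Finset ι), ?_, ?_⟩
    · change _ ≤ b
      rwa [← sum_extend_mul_of_binary e w hx]
    · exact (sum_extend_mul_of_binary e _ hx).symm
  · rintro ⟨S, hS, rfl⟩
    let x : Fin N → ℝ := extend e (fun i => if i ∈ S then 1 else 0) 0
    have hx : ∀ k, x k = 0 ∨ x k = 1 := fun k => by
      by_cases hk : ∃ i, e i = k
      · obtain ⟨i, rfl⟩ := hk
        by_cases hi : i ∈ S <;> simp [x, e.injective.extend_apply, hi]
      · simp [x, extend_apply' _ _ _ hk]
    have hxS : ({i | x (e i) = 1} : Finset ι) = S := by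
      ext i
      by_cases hi : i ∈ S <;> simp [x, e.injective.extend_apply, hi]
    refine ⟨x, hx, ?_, ?_⟩
    · rwa [sum_extend_mul_of_binary e w hx, hxS]
    · rw [sum_extend_mul_of_binary e _ hx, hxS]

end Padding

namespace KnapsackGadget

variable (n : ℕ)

abbrev BitPair := {p : Fin n × Fin n // p.1 < p.2}

/-- `inl k` is the item of bit `k`; each pair of bits `p` has a filler item `inr (inl p)` and a
penalty item `inr (inr p)`. -/
abbrev Item := Fin n ⊕ BitPair n ⊕ BitPair n

theorem card_item : Fintype.card (Item n) = n ^ 2 := by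
  simp only [Fintype.card_sum, Fintype.card_fin, Fintype.card_subtype, ← univ_product_univ,
    card_product_filter_lt, card_univ, Nat.choose_two_right]
  rw [← two_mul, Nat.two_mul_div_two_of_even (Nat.even_mul_pred_self n)]
  cases n
  · rfl
  · simp only [Nat.add_sub_cancel]
    ring

theorem card_item_le : Fintype.card (Item n) ≤ (9 * n ^ 2 - 7 * n) / 2 := by
  have : n ≤ n ^ 2 := Nat.le_self_pow two_ne_zero n
  rw [card_item]
  omega

noncomputable def itemEmbedding : Item n ↪ Fin ((9 * n ^ 2 - 7 * n) / 2) :=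
  (Fintype.equivFin (Item n)).toEmbedding.trans (Fin.castLEEmb (card_item_le n))

variable {n}

/-- Base 6 leaves room for the digits `0, …, 4` of a selection, so weights add without carries. -/
noncomputable def pairWeight (p : BitPair n) : ℕ := 6 ^ (Fintype.equivFin (BitPair n) p : ℕ)

def bitCount (B : Finset (Fin n)) (p : BitPair n) : ℕ :=
  (if p.1.1 ∈ B then 1 else 0) + (if p.1.2 ∈ B then 1 else 0)

noncomputable def pairBonus (p : BitPair n) : ℝ := 2 ^ (p.1.1 : ℕ) * 2 ^ (p.1.2 : ℕ)

noncomputable def itemWeight : Item n → ℕ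
  | .inl k => ∑ p, bitCount {k} p * pairWeight p
  | .inr (.inl p) | .inr (.inr p) => pairWeight p

noncomputable def itemSlope : Item n → ℝ
  | .inl k => 2 ^ (k : ℕ)
  | .inr _ => 0

noncomputable def itemOffset : Item n → ℝ
  | .inl k => 4 ^ (k : ℕ) / 2
  | .inr (.inl _) => 0
  | .inr (.inr p) => -pairBonus p

variable (n) in
noncomputable def capacity : ℕ := ∑ p : BitPair n, 2 * pairWeight p

variable (n) in
noncomputable def scale : ℝ := (4 ^ n)⁻¹

noncomputable def profitSlope (i : Item n) : ℝ := scale n * itemSlope i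

noncomputable def profitConst (i : Item n) : ℝ := itemWeight i + scale n * itemOffset i

def digit (B : Finset (Fin n)) (F D : Finset (BitPair n)) (p : BitPair n) : ℕ :=
  bitCount B p + (if p ∈ F then 1 else 0) + (if p ∈ D then 1 else 0)

theorem sum_itemWeight_disjSum (B : Finset (Fin n)) (F D : Finset (BitPair n)) :
    ∑ i ∈ B.disjSum (F.disjSum D), itemWeight i = ∑ p, digit B F D p * pairWeight p := by
  have hB : ∀ p, ∑ k ∈ B, bitCount {k} p = bitCount B p := fun p => by
    simp [bitCount, sum_add_distrib]
  simp only [sum_disjSum, itemWeight]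
  rw [sum_comm]
  simp only [← sum_mul, hB, digit, add_mul, sum_add_distrib, ite_mul, one_mul, zero_mul,
    sum_ite_mem, univ_inter]
  exact (add_assoc _ _ _).symm

theorem sum_itemSlope_mul_add_itemOffset_disjSum (B : Finset (Fin n)) (F D : Finset (BitPair n))
    (q : ℝ) :
    ∑ i ∈ B.disjSum (F.disjSum D), (itemSlope i * q + itemOffset i) =
      ∑ k ∈ B, ((2 : ℝ) ^ (k : ℕ) * q + 4 ^ (k : ℕ) / 2) - ∑ p ∈ D, pairBonus p := by
  simp [sum_disjSum, itemSlope, itemOffset, sub_eq_add_neg]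

/-- With `g k = 2 ^ k` for `k ∉ B` and `g k = 0` for `k ∈ B`, the penalty is `∑ k < l, g k * g l`,
which completes `∑ k ∈ B, 4 ^ k / 2` to a square in `m = ∑ k ∈ B, 2 ^ k`. -/
theorem sum_bits_sub_sum_pairBonus_eq_quadLine (B : Finset (Fin n)) (q : ℝ) :
    ∑ k ∈ B, ((2 : ℝ) ^ (k : ℕ) * q + 4 ^ (k : ℕ) / 2) -
        ∑ p with bitCount B p = 0, pairBonus p =
      quadLine (2 ^ n - 1) (∑ k ∈ B, 2 ^ (k : ℕ)) q + (4 ^ n - 1) / 6 := by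
  set g : Fin n → ℝ := fun k => if k ∈ Bᶜ then 2 ^ (k : ℕ) else 0
  have hpen : ∑ p with bitCount B p = 0, pairBonus p = ∑ p : BitPair n, g p.1.1 * g p.1.2 := by
    rw [sum_filter]
    refine sum_congr rfl fun p _ => ?_
    by_cases h1 : p.1.1 ∈ B <;> by_cases h2 : p.1.2 ∈ B <;> simp [bitCount, pairBonus, g, h1, h2]
  have hsum : ∑ k, g k = 2 ^ n - 1 - ((∑ k ∈ B, 2 ^ (k : ℕ) : ℕ) : ℝ) := by
    rw [← cast_sum_two_pow_add_sum_compl B, add_sub_cancel_left, sum_ite_mem, univ_inter]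
  have hsq : ∑ k, g k ^ 2 = (4 ^ n - 1) / 3 - ∑ k ∈ B, (4 : ℝ) ^ (k : ℕ) := by
    have h4 : ∑ k : Fin n, (4 : ℝ) ^ (k : ℕ) = (4 ^ n - 1) / 3 := by
      rw [Fin.sum_univ_eq_sum_range (fun k => (4 : ℝ) ^ k), geom_sum_eq (by norm_num)]
      ring
    rw [← h4, ← sum_add_sum_compl B (fun k : Fin n => (4 : ℝ) ^ (k : ℕ)), add_sub_cancel_left,
      ← univ_inter Bᶜ, ← sum_ite_mem]
    refine sum_congr rfl fun k _ => ?_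
    by_cases hk : k ∈ Bᶜ
    · simp only [g, if_pos hk]
      rw [← pow_mul, mul_comm, pow_mul]
      norm_num
    · simp only [g, if_neg hk]
      ring
  have hB : ∑ k ∈ B, ((2 : ℝ) ^ (k : ℕ) * q + 4 ^ (k : ℕ) / 2) =
      ((∑ k ∈ B, 2 ^ (k : ℕ) : ℕ) : ℝ) * q + (∑ k ∈ B, (4 : ℝ) ^ (k : ℕ)) / 2 := by
    push_cast
    rw [sum_add_distrib, sum_mul, sum_div]
  rw [hpen, quadLine, hB, cast_two_pow_sub_one]
  linear_combination (-1 / 2 : ℝ) * two_mul_sum_lt_pairs_mul g + (1 / 2 : ℝ) * hsq +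
    (-1 / 2 : ℝ) * (∑ k, g k + (2 ^ n - 1 - ((∑ k ∈ B, 2 ^ (k : ℕ) : ℕ) : ℝ))) * hsum

variable (n) in
theorem scale_pos : 0 < scale n := by
  unfold scale
  positivity

theorem pairBonus_nonneg (p : BitPair n) : 0 ≤ pairBonus p := by
  unfold pairBonus
  positivity

variable (n) in
theorem scale_mul_sum_pairBonus_lt_one : scale n * ∑ p : BitPair n, pairBonus p < 1 := by
  have h := sum_bits_sub_sum_pairBonus_eq_quadLine (∅ : Finset (Fin n)) 0
  simp only [bitCount, notMem_empty, if_false, add_zero, filter_true, sum_empty, zero_sub,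
    quadLine, CharP.cast_eq_zero, mul_zero, sub_zero, cast_two_pow_sub_one] at h
  have hx : (1 : ℝ) ≤ 2 ^ n := one_le_pow₀ one_le_two
  have h4 : (4 : ℝ) ^ n = (2 ^ n) ^ 2 := by
    rw [← pow_mul, mul_comm, pow_mul]
    norm_num
  rw [h4] at h
  rw [scale, h4, inv_mul_lt_iff₀ (by positivity)]
  nlinarith

theorem digit_eq_two_of_weight_eq {B : Finset (Fin n)} {F D : Finset (BitPair n)}
    (h : ∑ i ∈ B.disjSum (F.disjSum D), itemWeight i = capacity n) (p : BitPair n) :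
    digit B F D p = 2 := by
  rw [sum_itemWeight_disjSum, capacity] at h
  refine congrFun (eq_of_sum_mul_pow_eq (β := 6) (d := fun _ => 2) (Fintype.equivFin _)
    (fun p => ?_) (fun _ => by norm_num) h) p
  unfold digit bitCount
  split_ifs <;> norm_num

theorem weight_add_penalty_le_capacity {B : Finset (Fin n)} {F D : Finset (BitPair n)}
    (hW : ∑ i ∈ B.disjSum (F.disjSum D), itemWeight i ≤ capacity n) :
    ((∑ i ∈ B.disjSum (F.disjSum D), itemWeight i : ℕ) : ℝ) +
      scale n * (∑ p with bitCount B p = 0, pairBonus p - ∑ p ∈ D, pairBonus p) ≤ capacity n := by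
  have hτ := scale_pos n
  rcases hW.eq_or_lt with hfull | hless
  · have hsub : ({p | bitCount B p = 0} : Finset (BitPair n)) ⊆ D := fun p hp => by
      have := digit_eq_two_of_weight_eq hfull p
      simp only [mem_filter, mem_univ, true_and] at hp
      unfold digit at this
      split_ifs at this <;> first | assumption | omega
    have := sum_le_sum_of_subset_of_nonneg hsub fun p _ _ => pairBonus_nonneg p
    rw [hfull]
    linarith [mul_nonpos_of_nonneg_of_nonpos hτ.le (sub_nonpos.2 this)]
  · have hW' : ((∑ i ∈ B.disjSum (F.disjSum D), itemWeight i : ℕ) : ℝ) + 1 ≤ capacity n := by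
      exact_mod_cast hless
    have h1 : ∑ p with bitCount B p = 0, pairBonus p ≤ ∑ p, pairBonus p :=
      sum_le_sum_of_subset_of_nonneg (subset_univ _) fun p _ _ => pairBonus_nonneg p
    have h2 : 0 ≤ ∑ p ∈ D, pairBonus p := sum_nonneg fun p _ => pairBonus_nonneg p
    have := mul_le_mul_of_nonneg_left (a := scale n)
      (show ∑ p with bitCount B p = 0, pairBonus p - ∑ p ∈ D, pairBonus p ≤ ∑ p, pairBonus p by
        linarith) hτ.le
    linarith [scale_mul_sum_pairBonus_lt_one n]

theorem sum_profit_disjSum (B : Finset (Fin n)) (F D : Finset (BitPair n)) (q : ℝ) :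
    ∑ i ∈ B.disjSum (F.disjSum D), (profitSlope i * q + profitConst i) =
      ((∑ i ∈ B.disjSum (F.disjSum D), itemWeight i : ℕ) : ℝ) +
        scale n * (∑ p with bitCount B p = 0, pairBonus p - ∑ p ∈ D, pairBonus p) +
        scale n * (quadLine (2 ^ n - 1) (∑ k ∈ B, 2 ^ (k : ℕ)) q + (4 ^ n - 1) / 6) := by
  have h : ∀ i, profitSlope i * q + profitConst i =
      itemWeight i + scale n * (itemSlope i * q + itemOffset i) := fun i => by
    unfold profitSlope profitConst
    ring
  rw [sum_congr rfl fun i _ => h i, sum_add_distrib, ← mul_sum,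
    sum_itemSlope_mul_add_itemOffset_disjSum, ← sum_bits_sub_sum_pairBonus_eq_quadLine,
    Nat.cast_sum]
  ring

theorem exists_sum_profit_eq {m : ℕ} (hm : m < 2 ^ n) (q : ℝ) :
    ∃ S : Finset (Item n), ∑ i ∈ S, itemWeight i = capacity n ∧
      ∑ i ∈ S, (profitSlope i * q + profitConst i) =
        capacity n + scale n * (quadLine (2 ^ n - 1) m q + (4 ^ n - 1) / 6) := by
  obtain ⟨B, rfl⟩ := exists_finset_sum_two_pow_eq hm
  let F : Finset (BitPair n) := {p | bitCount B p ≤ 1}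
  let D : Finset (BitPair n) := {p | bitCount B p = 0}
  have hdigit : ∀ p, digit B F D p = 2 := fun p => by
    simp only [digit, F, D, mem_filter, mem_univ, true_and]
    by_cases h1 : p.1.1 ∈ B <;> by_cases h2 : p.1.2 ∈ B <;> simp [bitCount, h1, h2]
  have hW : ∑ i ∈ B.disjSum (F.disjSum D), itemWeight i = capacity n := by
    rw [sum_itemWeight_disjSum, capacity]
    simp only [hdigit]
  refine ⟨B.disjSum (F.disjSum D), hW, ?_⟩
  rw [sum_profit_disjSum, hW, sub_self, mul_zero, add_zero]

theorem sum_profit_le {S : Finset (Item n)} (hS : ∑ i ∈ S, itemWeight i ≤ capacity n) (q : ℝ) :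
    ∑ i ∈ S, (profitSlope i * q + profitConst i) ≤
      capacity n + scale n * (quadEnvelope (2 ^ n - 1) q + (4 ^ n - 1) / 6) := by
  rw [← toLeft_disjSum_toRight (u := S), ← toLeft_disjSum_toRight (u := S.toRight)] at hS ⊢
  have hm : ∑ k ∈ S.toLeft, 2 ^ (k : ℕ) ∈ range (2 ^ n - 1 + 1) := by
    have := sum_two_pow_lt S.toLeft
    rw [mem_range]
    omega
  have hline := mul_le_mul_of_nonneg_left (le_sup' (fun m => quadLine (2 ^ n - 1) m q) hm)
    (scale_pos n).le
  rw [sum_profit_disjSum, quadEnvelope]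
  linarith [weight_add_penalty_le_capacity hS]

theorem isGreatest_sum_profit (q : ℝ) :
    IsGreatest ((fun S : Finset (Item n) => ∑ i ∈ S, (profitSlope i * q + profitConst i)) ''
        {S | ∑ i ∈ S, (itemWeight i : ℝ) ≤ capacity n})
      (capacity n + scale n * (quadEnvelope (2 ^ n - 1) q + (4 ^ n - 1) / 6)) := by
  constructor
  · obtain ⟨m, hm, hmq⟩ := exists_mem_eq_sup' (nonempty_range_add_one (n := 2 ^ n - 1))
      fun m => quadLine (2 ^ n - 1) m q
    rw [mem_range, Nat.sub_add_cancel Nat.one_le_two_pow] at hm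
    obtain ⟨S, hW, hS⟩ := exists_sum_profit_eq hm q
    exact ⟨S, by exact_mod_cast hW.le, by rw [quadEnvelope, hmq]; exact hS⟩
  · rintro _ ⟨S, hS, rfl⟩
    exact sum_profit_le (by exact_mod_cast hS) q

theorem profitSlope_nonneg (i : Item n) : 0 ≤ profitSlope i := by
  have := scale_pos n
  rcases i with k | _ <;> simp only [profitSlope, itemSlope] <;> positivity

theorem profitConst_nonneg (i : Item n) : 0 ≤ profitConst i := by
  have hτ := scale_pos n
  rcases i with k | p | p
  · simp only [profitConst, itemOffset]
    positivity
  · simp only [profitConst, itemWeight, itemOffset]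
    positivity
  · have hbonus : scale n * pairBonus p ≤ 1 :=
      (mul_le_mul_of_nonneg_left (single_le_sum (fun p _ => pairBonus_nonneg p) (mem_univ p))
        hτ.le).trans (scale_mul_sum_pairBonus_lt_one n).le
    have hw : (1 : ℝ) ≤ pairWeight p := by
      unfold pairWeight
      exact_mod_cast Nat.one_le_pow _ _ (by norm_num)
    simp only [profitConst, itemWeight, itemOffset]
    linarith

variable (n) in
theorem exists_paramKnapVal_eq_quadEnvelope :
    ∃ (p1 p2 w : Fin ((9 * n ^ 2 - 7 * n) / 2) → ℝ) (b a c : ℝ),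
      (∀ i, 0 ≤ p1 i) ∧ (∀ i, 0 ≤ p2 i) ∧ (∀ i, 0 ≤ w i) ∧ 0 ≤ b ∧ 0 < a ∧
      paramKnapVal _ p1 p2 w b = fun q => a * quadEnvelope (2 ^ n - 1) q + c := by
  have hpad {g : Item n → ℝ} (hg : ∀ i, 0 ≤ g i) : ∀ k, 0 ≤ extend (itemEmbedding n) g 0 k :=
    extend_nonneg (f := itemEmbedding n) (g := g) (e := 0) hg le_rfl
  refine ⟨extend (itemEmbedding n) profitSlope 0, extend (itemEmbedding n) profitConst 0,
    extend (itemEmbedding n) (fun i => (itemWeight i : ℝ)) 0, capacity n, scale n,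
    capacity n + scale n * ((4 ^ n - 1) / 6), hpad profitSlope_nonneg, hpad profitConst_nonneg,
    hpad fun i => Nat.cast_nonneg _, Nat.cast_nonneg _, scale_pos n, funext fun q => ?_⟩
  rw [paramKnapVal_extend, (isGreatest_sum_profit q).csSup_eq]
  ring

end KnapsackGadget

theorem stmt6_general (n : ℕ) :
    ∃ (p1 p2 w : Fin ((9 * n ^ 2 - 7 * n) / 2) → ℝ) (b : ℝ),
      (∀ i, 0 ≤ p1 i) ∧ (∀ i, 0 ≤ p2 i) ∧ (∀ i, 0 ≤ w i) ∧ 0 ≤ b ∧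
      {q : ℝ | q ∈ Set.Ioo (-(2 ^ n : ℝ)) (2 ^ n) ∧
        IsBreakpoint (paramKnapVal ((9 * n ^ 2 - 7 * n) / 2) p1 p2 w b) q}.ncard
        = 2 ^ n - 1 := by
  obtain ⟨p1, p2, w, b, a, c, hp1, hp2, hw, hb, ha, hf⟩ :=
    KnapsackGadget.exists_paramKnapVal_eq_quadEnvelope n
  refine ⟨p1, p2, w, b, hp1, hp2, hw, hb, ?_⟩
  simp_rw [hf, isBreakpoint_const_mul_add_iff ha.ne']
  have hM : ((2 ^ n - 1 : ℕ) : ℝ) + 1 = 2 ^ n := by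
    rw [cast_two_pow_sub_one]
    ring
  have hIoo : ∀ t, IsBreakpoint (quadEnvelope (2 ^ n - 1)) t →
      t ∈ Set.Ioo (-(2 ^ n : ℝ)) (2 ^ n) := fun t ht => by
    simpa only [hM] using mem_Ioo_of_isBreakpoint_quadEnvelope ht
  convert ncard_setOf_isBreakpoint_quadEnvelope using 2
  exact Set.ext fun t => and_iff_right_of_imp (hIoo t)

theorem stmt6 (n : ℕ) (hn : 1 ≤ n) :
    ∃ (p1 p2 w : Fin ((9 * n ^ 2 - 7 * n) / 2) → ℝ) (b : ℝ),
      (∀ i, 0 ≤ p1 i) ∧ (∀ i, 0 ≤ p2 i) ∧ (∀ i, 0 ≤ w i) ∧ 0 ≤ b ∧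
      {q : ℝ | q ∈ Set.Ioo (-(2 ^ n : ℝ)) (2 ^ n) ∧
        IsBreakpoint (paramKnapVal ((9 * n ^ 2 - 7 * n) / 2) p1 p2 w b) q}.ncard
        = 2 ^ n - 1 :=
  stmt6_general n
end

section
/- For every n ∈ ℕ with n ≥ 1, there exist N = (9n² − 7n)/2, profits p¹, p² : Fin N → ℕ, weights w : Fin N → ℕ, and a capacity b ∈ ℕ, such that the set of nondominated points (for maximization) of Y = { (Σᵢ p¹(i)·x(i), Σᵢ p²(i)·x(i)) : x : Fin N → {0,1}, Σᵢ w(i)·x(i) ≤ b } ⊆ ℕ² has cardinality at least 2ⁿ − 1. In particular, the number of nondominated points of the biobjective knapsack problem can be exponential in the size of the instance. -/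
/-- The set of nondominated points (for maximization) of `Y ⊆ ℕ²`. -/
def NDmax (Y : Set (ℕ × ℕ)) : Set (ℕ × ℕ) :=
  {y ∈ Y | ¬ ∃ y' ∈ Y, y ≤ y' ∧ y' ≠ y}

def P1fn (n j : ℕ) : ℕ := if j < n then 2 ^ j else 0
def P2fn (n j : ℕ) : ℕ := if n ≤ j ∧ j < 2*n then 2 ^ (j - n) else 0

lemma Y_finite (N : ℕ) (p1 p2 w : Fin N → ℕ) (b : ℕ) :
    ({y : ℕ × ℕ | ∃ x : Fin N → ℕ, (∀ i, x i ≤ 1) ∧ (∑ i, w i * x i) ≤ b ∧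
      y = (∑ i, p1 i * x i, ∑ i, p2 i * x i)}).Finite := by
  apply Set.Finite.subset (Set.finite_Icc (0,0) (∑ i, p1 i, ∑ i, p2 i))
  rintro y ⟨x, hx, -, rfl⟩
  refine ⟨⟨Nat.zero_le _, Nat.zero_le _⟩, ⟨?_, ?_⟩⟩ <;> simp only <;>
    exact Finset.sum_le_sum (fun i _ => by
      have h := hx i
      calc _ ≤ _ * 1 := Nat.mul_le_mul_left _ h
        _ = _ := mul_one _)

lemma exists_bits (n : ℕ) : ∀ k < 2^n, ∃ c : ℕ → ℕ, (∀ j, c j ≤ 1) ∧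
    ∑ j ∈ Finset.range n, 2 ^ j * c j = k := by
  induction n with
  | zero => intro k hk; exact ⟨fun _ => 0, fun _ => Nat.zero_le 1, by simpa using by omega⟩
  | succ n ih =>
    intro k hk
    have hk2 : k / 2 < 2 ^ n := by
      have h2 : (2:ℕ)^(n+1) = 2^n * 2 := pow_succ 2 n
      omega
    obtain ⟨c, hc, hsum⟩ := ih (k / 2) hk2
    refine ⟨fun j => if j = 0 then k % 2 else c (j - 1), fun j => by dsimp; split <;> [omega; exact hc _], ?_⟩
    rw [Finset.sum_range_succ']
    have : ∀ i ∈ Finset.range n, 2 ^ (i+1) * (if i + 1 = 0 then k % 2 else c (i+1-1)) = 2 * (2 ^ i * c i) := by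
      intro i _
      simp [pow_succ]
      ring
    rw [Finset.sum_congr rfl this, ← Finset.mul_sum, hsum]
    simp
    omega

lemma sum_fin (N m : ℕ) (h : m ≤ N) (F : ℕ → ℕ) (hF : ∀ j, m ≤ j → F j = 0) :
    ∑ i : Fin N, F i.val = ∑ j ∈ Finset.range m, F j := by
  rw [Fin.sum_univ_eq_sum_range]
  exact (Finset.sum_subset (Finset.range_subset_range.2 h)
    (fun j _ hj => hF j (by simpa using hj))).symm

lemma sum_range_two_pow (n : ℕ) : ∑ j ∈ Finset.range n, 2 ^ j = 2 ^ n - 1 := by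
  induction n with
  | zero => simp
  | succ n ih =>
    have h := Nat.one_le_two_pow (n := n)
    have h2 : (2:ℕ)^(n+1) = 2^n * 2 := pow_succ 2 n
    rw [Finset.sum_range_succ, ih]
    omega

lemma main (n N : ℕ) (hN : 2 * n ≤ N) :
    2 ^ n ≤ (NDmax {y : ℕ × ℕ | ∃ x : Fin N → ℕ, (∀ i, x i ≤ 1) ∧
      (∑ i, (fun i : Fin N => P1fn n i.val + P2fn n i.val) i * x i) ≤ 2 ^ n - 1 ∧
      y = (∑ i, (fun i : Fin N => P1fn n i.val) i * x i,
           ∑ i, (fun i : Fin N => P2fn n i.val) i * x i)}).ncard := by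
  classical
  set Y : Set (ℕ × ℕ) := {y : ℕ × ℕ | ∃ x : Fin N → ℕ, (∀ i, x i ≤ 1) ∧
      (∑ i, (fun i : Fin N => P1fn n i.val + P2fn n i.val) i * x i) ≤ 2 ^ n - 1 ∧
      y = (∑ i, (fun i : Fin N => P1fn n i.val) i * x i,
           ∑ i, (fun i : Fin N => P2fn n i.val) i * x i)} with hYdef
  have hpow := Nat.one_le_two_pow (n := n)
  -- every point of Y has coordinate sum ≤ 2^n - 1
  have hYsum : ∀ y ∈ Y, y.1 + y.2 ≤ 2^n - 1 := by
    rintro y ⟨x, hx, hw, rfl⟩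
    simpa [add_mul, Finset.sum_add_distrib] using hw
  -- the candidate points are in Y
  have hmem : ∀ k < 2^n, (k, 2^n - 1 - k) ∈ Y := by
    intro k hk
    obtain ⟨c, hc, hsum⟩ := exists_bits n k hk
    set x : Fin N → ℕ := fun i =>
      if i.val < n then c i.val else if i.val < 2*n then 1 - c (i.val - n) else 0 with hxdef
    have hx1 : ∀ i, x i ≤ 1 := by
      intro i; rw [hxdef]; dsimp only
      split
      · exact hc _
      · split <;> omega
    have hp1 : (∑ i, (fun i : Fin N => P1fn n i.val) i * x i) = k := by
      have heq : ∀ i : Fin N, (fun i : Fin N => P1fn n i.val) i * x i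
          = (fun j => if j < n then 2 ^ j * c j else 0) i.val := by
        intro i
        rw [hxdef]; dsimp only [P1fn]
        by_cases h : i.val < n <;> simp [h]
      rw [Finset.sum_congr rfl (fun i _ => heq i)]
      refine (sum_fin N n (by omega) (fun j => if j < n then 2 ^ j * c j else 0)
        (fun j hj => by simp [Nat.not_lt.2 hj])).trans ?_
      rw [← hsum]
      exact Finset.sum_congr rfl (fun j hj => by simp [Finset.mem_range.1 hj])
    have hcomp : ∑ j ∈ Finset.range n, 2 ^ j * (1 - c j) = 2^n - 1 - k := by
      have hadd : ∑ j ∈ Finset.range n, 2 ^ j * c j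
          + ∑ j ∈ Finset.range n, 2 ^ j * (1 - c j) = 2^n - 1 := by
        rw [← Finset.sum_add_distrib, ← sum_range_two_pow n]
        refine Finset.sum_congr rfl (fun j _ => ?_)
        have := hc j
        rcases Nat.le_one_iff_eq_zero_or_eq_one.mp this with h | h <;> simp [h]
      omega
    have hp2 : (∑ i, (fun i : Fin N => P2fn n i.val) i * x i) = 2^n - 1 - k := by
      have heq : ∀ i : Fin N, (fun i : Fin N => P2fn n i.val) i * x i
          = (fun j => if n ≤ j ∧ j < 2*n then 2 ^ (j - n) * (1 - c (j - n)) else 0) i.val := by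
        intro i
        rw [hxdef]; dsimp only [P2fn]
        rcases Nat.lt_or_ge i.val n with h | h
        · simp [h, Nat.not_le.2 h]
        · by_cases h2 : i.val < 2*n <;> simp [h, h2, Nat.not_lt.2 h]
      rw [Finset.sum_congr rfl (fun i _ => heq i)]
      refine (sum_fin N (2*n) hN (fun j => if n ≤ j ∧ j < 2*n then 2 ^ (j - n) * (1 - c (j - n)) else 0)
        (fun j hj => by
          have : ¬ (n ≤ j ∧ j < 2*n) := by omega
          simp [this])).trans ?_
      rw [Finset.range_eq_Ico, ← Finset.sum_Ico_consecutive _ (Nat.zero_le n) (by omega : n ≤ 2*n)]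
      have h0 : ∑ j ∈ Finset.Ico 0 n, (fun j => if n ≤ j ∧ j < 2*n then 2 ^ (j - n) * (1 - c (j - n)) else 0) j = 0 := by
        refine Finset.sum_eq_zero (fun j hj => ?_)
        have := Finset.mem_Ico.1 hj
        have : ¬ (n ≤ j ∧ j < 2*n) := by omega
        simp [this]
      rw [h0, zero_add, Finset.sum_Ico_eq_sum_range]
      simp only [Nat.add_sub_cancel_left, two_mul]
      rw [← hcomp]
      refine Finset.sum_congr rfl (fun j hj => ?_)
      have hjn := Finset.mem_range.1 hj
      have : n ≤ n + j ∧ n + j < n + n := by omega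
      simp [this, Nat.add_sub_cancel_left]
    have hw : (∑ i, (fun i : Fin N => P1fn n i.val + P2fn n i.val) i * x i) ≤ 2^n - 1 := by
      have : (∑ i, (fun i : Fin N => P1fn n i.val + P2fn n i.val) i * x i)
          = (∑ i, (fun i : Fin N => P1fn n i.val) i * x i)
            + (∑ i, (fun i : Fin N => P2fn n i.val) i * x i) := by
        simp [add_mul, Finset.sum_add_distrib]
      rw [this, hp1, hp2]
      omega
    exact ⟨x, hx1, hw, by rw [hp1, hp2]⟩
  -- the candidate points are nondominated
  have hND : ∀ k < 2^n, (k, 2^n - 1 - k) ∈ NDmax Y := by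
    intro k hk
    refine ⟨hmem k hk, ?_⟩
    rintro ⟨y', hy', ⟨hle1, hle2⟩, hne⟩
    have h1 := hYsum y' hy'
    simp only at hle1 hle2
    apply hne
    have : y'.1 = k ∧ y'.2 = 2^n - 1 - k := by omega
    exact Prod.ext this.1 this.2
  -- cardinality
  have hfin : (NDmax Y).Finite := by
    apply Set.Finite.subset (Y_finite N _ _ _ _)
    exact fun y hy => hy.1
  have hsub : ↑((Finset.range (2^n)).image (fun k => (k, 2^n - 1 - k))) ⊆ NDmax Y := by
    intro y hy
    simp only [Finset.coe_image, Set.mem_image, Finset.mem_coe, Finset.mem_range] at hy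
    obtain ⟨k, hk, rfl⟩ := hy
    exact hND k hk
  calc 2^n = ((Finset.range (2^n)).image (fun k => (k, 2^n - 1 - k))).card := by
        rw [Finset.card_image_of_injective _ (fun a b h => congrArg Prod.fst h), Finset.card_range]
    _ = (↑((Finset.range (2^n)).image (fun k => (k, 2^n - 1 - k))) : Set (ℕ × ℕ)).ncard := by
        rw [Set.ncard_coe_finset]
    _ ≤ (NDmax Y).ncard := Set.ncard_le_ncard hsub hfin

theorem stmt7 (n : ℕ) (hn : 1 ≤ n) :
    ∃ (p1 p2 w : Fin ((9 * n ^ 2 - 7 * n) / 2) → ℕ) (b : ℕ),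
      2 ^ n - 1 ≤
        (NDmax {y : ℕ × ℕ | ∃ x : Fin ((9 * n ^ 2 - 7 * n) / 2) → ℕ,
          (∀ i, x i ≤ 1) ∧ (∑ i, w i * x i) ≤ b ∧
          y = (∑ i, p1 i * x i, ∑ i, p2 i * x i)}).ncard := by
  rcases eq_or_lt_of_le hn with h1 | h2
  · -- n = 1
    subst h1
    refine ⟨fun _ => 0, fun _ => 0, fun _ => 0, 0, ?_⟩
    set Y : Set (ℕ × ℕ) := {y : ℕ × ℕ | ∃ x : Fin ((9 * 1 ^ 2 - 7 * 1) / 2) → ℕ,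
          (∀ i, x i ≤ 1) ∧ (∑ i, (fun _ => 0) i * x i) ≤ 0 ∧
          y = (∑ i, (fun _ => 0) i * x i, ∑ i, (fun _ => 0) i * x i)} with hY
    have hz : ∀ y ∈ Y, y = ((0 : ℕ), (0 : ℕ)) := by
      rintro y ⟨x, hx, hw, rfl⟩
      simp
    have hmem : ((0 : ℕ), (0 : ℕ)) ∈ NDmax Y := by
      refine ⟨⟨fun _ => 0, fun _ => Nat.zero_le 1, by simp, by simp⟩, ?_⟩
      rintro ⟨y', hy', hle, hne⟩
      exact hne (hz y' hy')
    have hfin : (NDmax Y).Finite := by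
      apply Set.Finite.subset (Y_finite _ _ _ _ _)
      exact fun y hy => hy.1
    have : 0 < (NDmax Y).ncard := (Set.ncard_pos hfin).2 ⟨_, hmem⟩
    omega
  · -- 2 ≤ n
    refine ⟨fun i => P1fn n i.val, fun i => P2fn n i.val,
      fun i => P1fn n i.val + P2fn n i.val, 2 ^ n - 1, ?_⟩
    have hN : 2 * n ≤ (9 * n ^ 2 - 7 * n) / 2 := by
      have h1 : 18 * n ≤ 9 * n ^ 2 := by nlinarith
      omega
    exact le_trans (Nat.sub_le _ _) (main n _ hN)
end

section
/- Let A, B be finite subsets of ℕ². Then ND(A ⊙ B) = ND(ND(A) ⊙ ND(B)), where A ⊙ B = {(min(a₁,b₁), min(a₂,b₂)) : (a₁,a₂) ∈ A, (b₁,b₂) ∈ B} and ND(Y) denotes the set of nondominated points of Y. -/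
/-- The set of nondominated points (for minimization) of `Y ⊆ ℕ²`. -/
def ND (Y : Set (ℕ × ℕ)) : Set (ℕ × ℕ) :=
  {y ∈ Y | ¬ ∃ y' ∈ Y, y' ≤ y ∧ y' ≠ y}

/-- Componentwise minimum of two points of `ℕ²`. -/
def odot (a b : ℕ × ℕ) : ℕ × ℕ := (min a.1 b.1, min a.2 b.2)

/-- `A ⊙ B = {(min(a₁,b₁), min(a₂,b₂)) : a ∈ A, b ∈ B}`. -/
def odotSet (A B : Set (ℕ × ℕ)) : Set (ℕ × ℕ) := Set.image2 odot A B

lemma exists_nd_le (Y : Set (ℕ × ℕ)) (y : ℕ × ℕ) (hy : y ∈ Y) :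
    ∃ z ∈ ND Y, z ≤ y := by
  obtain ⟨n, hn⟩ : ∃ n, y.1 + y.2 = n := ⟨_, rfl⟩
  induction n using Nat.strong_induction_on generalizing y with
  | _ n ih =>
    by_cases h : ∃ y' ∈ Y, y' ≤ y ∧ y' ≠ y
    · obtain ⟨y', hy', hle, hne⟩ := h
      have h1 := hle.1
      have h2 := hle.2
      have hlt : y'.1 + y'.2 < n := by
        subst hn
        rcases lt_or_eq_of_le h1 with h|h
        · omega
        · rcases lt_or_eq_of_le h2 with h2'|h2'
          · omega
          · exact absurd (Prod.ext h h2') hne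
      obtain ⟨z, hz, hzle⟩ := ih _ hlt y' hy' rfl
      exact ⟨z, hz, hzle.trans hle⟩
    · exact ⟨y, ⟨hy, h⟩, le_refl y⟩

lemma odot_mono {a a' b b' : ℕ × ℕ} (ha : a' ≤ a) (hb : b' ≤ b) :
    odot a' b' ≤ odot a b := by
  exact ⟨min_le_min ha.1 hb.1, min_le_min ha.2 hb.2⟩

theorem stmt10 (A B : Set (ℕ × ℕ)) (hA : A.Finite) (hB : B.Finite) :
    ND (odotSet A B) = ND (odotSet (ND A) (ND B)) := by
  have hsub : odotSet (ND A) (ND B) ⊆ odotSet A B :=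
    Set.image2_subset (fun x hx => hx.1) (fun x hx => hx.1)
  ext z
  constructor
  · rintro ⟨hz, hnd⟩
    obtain ⟨a, ha, b, hb, rfl⟩ := hz
    obtain ⟨a', ha', haa⟩ := exists_nd_le A a ha
    obtain ⟨b', hb', hbb⟩ := exists_nd_le B b hb
    have hmem : odot a' b' ∈ odotSet A B :=
      ⟨a', ha'.1, b', hb'.1, rfl⟩
    have hle : odot a' b' ≤ odot a b := odot_mono haa hbb
    have heq : odot a' b' = odot a b := by
      by_contra hne
      exact hnd ⟨odot a' b', hmem, hle, hne⟩
    refine ⟨heq ▸ ⟨a', ha', b', hb', rfl⟩, ?_⟩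
    rintro ⟨w, hw, hwle, hwne⟩
    exact hnd ⟨w, hsub hw, hwle, hwne⟩
  · rintro ⟨hz, hnd⟩
    refine ⟨hsub hz, ?_⟩
    rintro ⟨y', hy', hyle, hyne⟩
    obtain ⟨a, ha, b, hb, rfl⟩ := hy'
    obtain ⟨a', ha', haa⟩ := exists_nd_le A a ha
    obtain ⟨b', hb', hbb⟩ := exists_nd_le B b hb
    have hmem : odot a' b' ∈ odotSet (ND A) (ND B) :=
      ⟨a', ha', b', hb', rfl⟩
    have hle : odot a' b' ≤ z := (odot_mono haa hbb).trans hyle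
    by_cases heq : odot a' b' = z
    · exact hyne (le_antisymm hyle (heq ▸ odot_mono haa hbb))
    · exact hnd ⟨odot a' b', hmem, hle, heq⟩
end

section
/- Let T be a series-parallel term (Leaf(u¹,u²,c) with u¹,u²,c ∈ ℕ, or Parallel(T₁,T₂), or Series(T₁,T₂)) and let the label sets L(T,x) ⊆ ℕ² be defined recursively by: L(Leaf(u¹,u²,c), x) = {(u¹,u²)} if x < c and {(0,0)} if x ≥ c; L(Parallel(T₁,T₂), x) = ND(⋃_{k=0}^{x} L(T₁,k) ⊕ L(T₂,x−k)); L(Series(T₁,T₂), x) = ND(⋃_{k=0}^{x} L(T₁,k) ⊙ L(T₂,x−k)). Then for every x ∈ ℕ, L(T,x) equals the set of nondominated points of { val(T,γ) : γ an interdiction strategy for T with cost(T,γ) ≤ x }. -/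
open Pointwise

/-- A series-parallel term: a leaf carries two arc capacities and an
interdiction cost; inner nodes are parallel or series compositions. -/
inductive SPTerm : Type
  | leaf (u1 u2 c : ℕ) : SPTerm
  | parallel (T1 T2 : SPTerm) : SPTerm
  | series (T1 T2 : SPTerm) : SPTerm

/-- An interdiction strategy for a series-parallel term: each leaf is
interdicted (`true`) or not (`false`). -/
inductive SPStrat : SPTerm → Type
  | leaf (u1 u2 c : ℕ) (interdicted : Bool) : SPStrat (.leaf u1 u2 c)
  | parallel {T1 T2 : SPTerm} (γ1 : SPStrat T1) (γ2 : SPStrat T2) :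
      SPStrat (.parallel T1 T2)
  | series {T1 T2 : SPTerm} (γ1 : SPStrat T1) (γ2 : SPStrat T2) :
      SPStrat (.series T1 T2)

/-- The total interdiction cost of a strategy. -/
def SPcost : {T : SPTerm} → SPStrat T → ℕ
  | _, .leaf _ _ c b => if b then c else 0
  | _, .parallel γ1 γ2 => SPcost γ1 + SPcost γ2
  | _, .series γ1 γ2 => SPcost γ1 + SPcost γ2

/-- The vector of the two maximum flow values of the interdicted
series-parallel graph. -/
def SPval : {T : SPTerm} → SPStrat T → ℕ × ℕ
  | _, .leaf u1 u2 _ b => if b then (0, 0) else (u1, u2)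
  | _, .parallel γ1 γ2 => SPval γ1 + SPval γ2
  | _, .series γ1 γ2 =>
      (min (SPval γ1).1 (SPval γ2).1, min (SPval γ1).2 (SPval γ2).2)

/-- The label sets of the dynamic programming algorithm. -/
def L : SPTerm → ℕ → Set (ℕ × ℕ)
  | .leaf u1 u2 c, x => if x < c then {(u1, u2)} else {(0, 0)}
  | .parallel T1 T2, x =>
      ND (⋃ k ∈ Finset.range (x + 1),
        Set.image2 (· + ·) (L T1 k) (L T2 (x - k)))
  | .series T1 T2, x =>
      ND (⋃ k ∈ Finset.range (x + 1),
        Set.image2 odot (L T1 k) (L T2 (x - k)))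

/-- The set of achievable value vectors within budget `x`. -/
def Ys (T : SPTerm) (x : ℕ) : Set (ℕ × ℕ) :=
  {y : ℕ × ℕ | ∃ γ : SPStrat T, SPcost γ ≤ x ∧ y = SPval γ}

lemma nd_subset (Y : Set (ℕ × ℕ)) : ND Y ⊆ Y := fun _ hy => hy.1

lemma nd_dom (Y : Set (ℕ × ℕ)) : ∀ y ∈ Y, ∃ z ∈ ND Y, z ≤ y := by
  have H : ∀ n : ℕ, ∀ y : ℕ × ℕ, y ∈ Y → y.1 + y.2 ≤ n → ∃ z ∈ ND Y, z ≤ y := by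
    intro n
    induction n using Nat.strong_induction_on with
    | _ n ih =>
      intro y hy hn
      by_cases h : ∃ y' ∈ Y, y' ≤ y ∧ y' ≠ y
      · obtain ⟨y', hy', hle, hne⟩ := h
        have h1 : y'.1 ≤ y.1 := hle.1
        have h2 : y'.2 ≤ y.2 := hle.2
        have hlt : y'.1 + y'.2 < y.1 + y.2 := by
          rcases Nat.lt_or_ge (y'.1 + y'.2) (y.1 + y.2) with h' | h'
          · exact h'
          · exact absurd (Prod.ext (by omega) (by omega)) hne
        obtain ⟨z, hz, hzle⟩ := ih (y'.1 + y'.2) (lt_of_lt_of_le hlt hn) y' hy' le_rfl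
        exact ⟨z, hz, hzle.trans hle⟩
      · exact ⟨y, ⟨hy, h⟩, le_refl y⟩
  intro y hy; exact H (y.1 + y.2) y hy le_rfl

lemma nd_congr {A B : Set (ℕ × ℕ)} (hAB : A ⊆ B)
    (hdom : ∀ b ∈ B, ∃ a ∈ A, a ≤ b) : ND A = ND B := by
  ext y
  constructor
  · rintro ⟨hyA, hnd⟩
    refine ⟨hAB hyA, ?_⟩
    rintro ⟨y', hy', hle, hne⟩
    obtain ⟨a, haA, hale⟩ := hdom y' hy'
    by_cases heq : a = y
    · exact hne (le_antisymm hle (heq ▸ hale))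
    · exact hnd ⟨a, haA, hale.trans hle, heq⟩
  · rintro ⟨hyB, hnd⟩
    obtain ⟨a, haA, hale⟩ := hdom y hyB
    have hay : a = y := by
      by_contra h
      exact hnd ⟨a, hAB haA, hale, h⟩
    subst hay
    exact ⟨haA, fun ⟨y', hy', hle, hne⟩ => hnd ⟨y', hAB hy', hle, hne⟩⟩

lemma nd_singleton (a : ℕ × ℕ) : ND {a} = {a} := by
  ext y
  constructor
  · rintro ⟨h, _⟩; exact h
  · rintro rfl
    exact ⟨rfl, fun ⟨y', hy', _, hne⟩ => hne hy'⟩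

lemma nd_of_zero_mem {Y : Set (ℕ × ℕ)} (h : ((0, 0) : ℕ × ℕ) ∈ Y) :
    ND Y = {((0, 0) : ℕ × ℕ)} := by
  ext y
  constructor
  · rintro ⟨hy, hnd⟩
    by_contra hne
    exact hnd ⟨(0, 0), h, ⟨Nat.zero_le _, Nat.zero_le _⟩, fun h' => hne h'.symm⟩
  · rintro rfl
    exact ⟨h, fun ⟨y', _, hle, hne⟩ =>
      hne (le_antisymm hle ⟨Nat.zero_le _, Nat.zero_le _⟩)⟩

lemma nd_union_image2 (op : ℕ × ℕ → ℕ × ℕ → ℕ × ℕ)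
    (hmono : ∀ a a' b b' : ℕ × ℕ, a ≤ a' → b ≤ b' → op a b ≤ op a' b')
    (Y1 Y2 : ℕ → Set (ℕ × ℕ)) (x : ℕ) :
    ND (⋃ k ∈ Finset.range (x + 1), Set.image2 op (ND (Y1 k)) (ND (Y2 (x - k))))
      = ND (⋃ k ∈ Finset.range (x + 1), Set.image2 op (Y1 k) (Y2 (x - k))) := by
  apply nd_congr
  · exact Set.iUnion₂_mono fun k _ => Set.image2_subset (nd_subset _) (nd_subset _)
  · intro b hb
    simp only [Set.mem_iUnion, Set.mem_image2] at hb
    obtain ⟨k, hk, y1, hy1, y2, hy2, rfl⟩ := hb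
    obtain ⟨z1, hz1, hz1le⟩ := nd_dom _ y1 hy1
    obtain ⟨z2, hz2, hz2le⟩ := nd_dom _ y2 hy2
    refine ⟨op z1 z2, ?_, hmono _ _ _ _ hz1le hz2le⟩
    simp only [Set.mem_iUnion, Set.mem_image2]
    exact ⟨k, hk, z1, hz1, z2, hz2, rfl⟩

lemma par_Y (T1 T2 : SPTerm) (x : ℕ) :
    (⋃ k ∈ Finset.range (x + 1), Set.image2 (· + ·) (Ys T1 k) (Ys T2 (x - k)))
      = Ys (.parallel T1 T2) x := by
  ext y
  simp only [Set.mem_iUnion, Finset.mem_range, Set.mem_image2, Ys, Set.mem_setOf_eq]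
  constructor
  · rintro ⟨k, hk, y1, ⟨γ1, hc1, rfl⟩, y2, ⟨γ2, hc2, rfl⟩, rfl⟩
    exact ⟨.parallel γ1 γ2, by simp only [SPcost]; omega, rfl⟩
  · rintro ⟨γ, hc, rfl⟩
    cases γ with
    | parallel γ1 γ2 =>
      simp only [SPcost] at hc
      exact ⟨SPcost γ1, by omega, SPval γ1, ⟨γ1, le_rfl, rfl⟩,
        SPval γ2, ⟨γ2, by omega, rfl⟩, rfl⟩

lemma ser_Y (T1 T2 : SPTerm) (x : ℕ) :
    (⋃ k ∈ Finset.range (x + 1), Set.image2 odot (Ys T1 k) (Ys T2 (x - k)))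
      = Ys (.series T1 T2) x := by
  ext y
  simp only [Set.mem_iUnion, Finset.mem_range, Set.mem_image2, Ys, Set.mem_setOf_eq]
  constructor
  · rintro ⟨k, hk, y1, ⟨γ1, hc1, rfl⟩, y2, ⟨γ2, hc2, rfl⟩, rfl⟩
    exact ⟨.series γ1 γ2, by simp only [SPcost]; omega, rfl⟩
  · rintro ⟨γ, hc, rfl⟩
    cases γ with
    | series γ1 γ2 =>
      simp only [SPcost] at hc
      exact ⟨SPcost γ1, by omega, SPval γ1, ⟨γ1, le_rfl, rfl⟩,
        SPval γ2, ⟨γ2, by omega, rfl⟩, rfl⟩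

theorem stmt12 (T : SPTerm) (x : ℕ) :
    L T x = ND {y : ℕ × ℕ | ∃ γ : SPStrat T, SPcost γ ≤ x ∧ y = SPval γ} := by
  show L T x = ND (Ys T x)
  induction T generalizing x with
  | leaf u1 u2 c =>
    simp only [L]
    split_ifs with h
    · have hY : Ys (.leaf u1 u2 c) x = {((u1, u2) : ℕ × ℕ)} := by
        ext y
        simp only [Ys, Set.mem_setOf_eq, Set.mem_singleton_iff]
        constructor
        · rintro ⟨γ, hc, rfl⟩
          cases γ with
          | leaf _ _ _ b =>
            cases b with
            | false => simp [SPval]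
            | true => simp only [SPcost, if_true] at hc; omega
        · rintro rfl
          exact ⟨.leaf u1 u2 c false, by simp [SPcost], by simp [SPval]⟩
      rw [hY, nd_singleton]
    · have h0 : ((0, 0) : ℕ × ℕ) ∈ Ys (.leaf u1 u2 c) x :=
        ⟨.leaf u1 u2 c true, by simp only [SPcost, if_true]; omega, by simp [SPval]⟩
      rw [nd_of_zero_mem h0]
  | parallel T1 T2 ih1 ih2 =>
    simp only [L, ih1, ih2]
    rw [nd_union_image2 (· + ·) (fun a a' b b' ha hb => add_le_add ha hb) (Ys T1) (Ys T2) x,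
      par_Y]
  | series T1 T2 ih1 ih2 =>
    simp only [L, ih1, ih2]
    rw [nd_union_image2 odot
      (fun a a' b b' ha hb => ⟨min_le_min ha.1 hb.1, min_le_min ha.2 hb.2⟩)
      (Ys T1) (Ys T2) x, ser_Y]
end

section
/- Let A, B be finite subsets of ℕ² and let p be a nondominated point of A ⊙ B = {(min(a₁,b₁), min(a₂,b₂)) : (a₁,a₂) ∈ A, (b₁,b₂) ∈ B}. Then there exist a nondominated point a = (a₁,a₂) of A and a nondominated point b = (b₁,b₂) of B with p = (min(a₁,b₁), min(a₂,b₂)). -/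
/-!
Take any `a ∈ A`, `b ∈ B` with `p = a ⊙ b`. Since `<` on `ℕ²` is well founded, there are
nondominated `a' ≤ a` in `A` and `b' ≤ b` in `B`. As `⊙` is monotone, `a' ⊙ b' ≤ p` is a
point of `A ⊙ B`, so it equals `p` because `p` is nondominated.
-/

theorem mem_ND_iff_minimal {Y : Set (ℕ × ℕ)} {y : ℕ × ℕ} : y ∈ ND Y ↔ Minimal (· ∈ Y) y := by
  simp only [ND, minimal_iff, not_exists, not_and]
  exact and_congr_right fun _ ↦ forall₂_congr fun y' _ ↦
    ⟨fun h hle ↦ (not_not.mp (h hle)).symm, fun h hle ↦ not_not.mpr (h hle).symm⟩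

theorem exists_mem_ND_le {Y : Set (ℕ × ℕ)} {y : ℕ × ℕ} (hy : y ∈ Y) : ∃ m ∈ ND Y, m ≤ y := by
  obtain ⟨m, hmy, hm⟩ := exists_minimal_le_of_wellFoundedLT (· ∈ Y) y hy
  exact ⟨m, mem_ND_iff_minimal.mpr hm, hmy⟩

theorem odot_le_odot {a b a' b' : ℕ × ℕ} (ha : a' ≤ a) (hb : b' ≤ b) : odot a' b' ≤ odot a b :=
  ⟨min_le_min ha.1 hb.1, min_le_min ha.2 hb.2⟩

theorem stmt14_general (A B : Set (ℕ × ℕ))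
    (p : ℕ × ℕ) (hp : p ∈ ND (odotSet A B)) :
    ∃ a ∈ ND A, ∃ b ∈ ND B, p = odot a b := by
  rw [mem_ND_iff_minimal] at hp
  obtain ⟨a, ha, b, hb, rfl⟩ := hp.prop
  obtain ⟨a', ha', haa'⟩ := exists_mem_ND_le ha
  obtain ⟨b', hb', hbb'⟩ := exists_mem_ND_le hb
  have hmem : odot a' b' ∈ odotSet A B := Set.mem_image2_of_mem ha'.1 hb'.1
  exact ⟨a', ha', b', hb', (hp.eq_of_le hmem (odot_le_odot haa' hbb')).symm⟩

theorem stmt14 (A B : Set (ℕ × ℕ)) (hA : A.Finite) (hB : B.Finite)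
    (p : ℕ × ℕ) (hp : p ∈ ND (odotSet A B)) :
    ∃ a ∈ ND A, ∃ b ∈ ND B, p = odot a b :=
  stmt14_general A B p hp
end

section
/- Let ε > 0, let M ∈ ℕ with M ≥ 1, and let Y be a nonempty finite subset of {0,1,…,M}². Then there exists a subset S ⊆ Y with |S| ≤ (⌈log_{1+ε} M⌉ + 2)² such that S ε-approximates Y, i.e., for every y ∈ Y there exists s ∈ S with s componentwise less than or equal to (1+ε)·y. -/
theorem stmt18 (ε : ℝ) (hε : 0 < ε) (M : ℕ) (hM : 1 ≤ M)
    (Y : Finset (ℕ × ℕ)) (hYne : Y.Nonempty)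
    (hY : ∀ y ∈ Y, y.1 ≤ M ∧ y.2 ≤ M) :
    ∃ S ⊆ Y, (S.card : ℤ) ≤ (⌈Real.logb (1 + ε) M⌉ + 2) ^ 2 ∧
      ∀ y ∈ Y, ∃ s ∈ S,
        (s.1 : ℝ) ≤ (1 + ε) * (y.1 : ℝ) ∧ (s.2 : ℝ) ≤ (1 + ε) * (y.2 : ℝ) := by
  classical
  have hb : (1 : ℝ) < 1 + ε := by linarith
  set K : ℤ := ⌈Real.logb (1 + ε) M⌉ with hK
  -- cell map
  set c : ℕ → ℤ := fun n => if n = 0 then -1 else ⌊Real.logb (1 + ε) n⌋ with hc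
  set f : ℕ × ℕ → ℤ × ℤ := fun y => (c y.1, c y.2) with hf
  have hK0 : 0 ≤ K :=
    Int.ceil_nonneg (Real.logb_nonneg hb (by exact_mod_cast hM))
  -- cell bounds
  have hcell_mem : ∀ n : ℕ, n ≤ M → c n ∈ Finset.Icc (-1 : ℤ) K := by
    intro n hn
    simp only [Finset.mem_Icc, hc]
    split_ifs with h
    · exact ⟨le_refl _, by linarith⟩
    · have hn1 : 1 ≤ n := Nat.one_le_iff_ne_zero.mpr h
      constructor
      · have : (0:ℝ) ≤ Real.logb (1+ε) n := Real.logb_nonneg hb (by exact_mod_cast hn1)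
        have := Int.floor_nonneg.mpr this
        omega
      · have h1 : Real.logb (1+ε) n ≤ Real.logb (1+ε) M :=
          Real.logb_le_logb_of_le hb (by exact_mod_cast hn1) (by exact_mod_cast hn)
        calc ⌊Real.logb (1+ε) n⌋ ≤ ⌈Real.logb (1+ε) n⌉ := Int.floor_le_ceil _
          _ ≤ K := Int.ceil_le_ceil h1
  -- same cell implies approximation
  have hcell_approx : ∀ a b : ℕ, c a = c b → (a : ℝ) ≤ (1 + ε) * b := by
    intro a b hab
    rcases Nat.eq_zero_or_pos a with ha | ha
    · subst ha
      simp only [Nat.cast_zero]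
      positivity
    rcases Nat.eq_zero_or_pos b with hb0 | hb0
    · exfalso
      have hb0' : b = 0 := hb0
      have h1 : c a = -1 := by rw [hab, hc]; simp [hb0']
      have ha' : a ≠ 0 := Nat.pos_iff_ne_zero.mp ha
      rw [hc] at h1
      simp only [if_neg ha'] at h1
      have : (0:ℝ) ≤ Real.logb (1+ε) a := Real.logb_nonneg hb (by exact_mod_cast ha)
      have := Int.floor_nonneg.mpr this
      omega
    · have ha' : (0:ℝ) < a := by exact_mod_cast ha
      have hb' : (0:ℝ) < b := by exact_mod_cast hb0
      have hca : c a = ⌊Real.logb (1+ε) a⌋ := by rw [hc]; simp [Nat.pos_iff_ne_zero.mp ha]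
      have hcb : c b = ⌊Real.logb (1+ε) b⌋ := by rw [hc]; simp [Nat.pos_iff_ne_zero.mp hb0]
      set k : ℤ := ⌊Real.logb (1+ε) b⌋ with hk
      have hfa : ⌊Real.logb (1+ε) a⌋ = k := by rw [← hca, hab, hcb]
      have h1 : Real.logb (1+ε) a < (k : ℝ) + 1 := by
        have := Int.lt_floor_add_one (Real.logb (1+ε) a); rw [hfa] at this; exact_mod_cast this
      have h2 : (k : ℝ) ≤ Real.logb (1+ε) b := Int.floor_le _
      have ha2 : (a : ℝ) < (1+ε) ^ ((k : ℝ) + 1) :=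
        (Real.logb_lt_iff_lt_rpow hb ha').mp h1
      have hb2 : (1+ε) ^ (k : ℝ) ≤ (b : ℝ) :=
        (Real.le_logb_iff_rpow_le hb hb').mp h2
      calc (a : ℝ) ≤ (1+ε) ^ ((k:ℝ) + 1) := ha2.le
        _ = (1+ε) * (1+ε) ^ (k:ℝ) := by
            rw [Real.rpow_add (by linarith), Real.rpow_one]; ring
        _ ≤ (1+ε) * b := by nlinarith [Real.rpow_natCast (1+ε) 0]
  -- representative picker
  set g : ℤ × ℤ → ℕ × ℕ := fun v =>
    if h : ∃ y ∈ Y, f y = v then h.choose else (0, 0) with hg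
  refine ⟨(Y.image f).image g, ?_, ?_, ?_⟩
  · intro s hs
    simp only [Finset.mem_image] at hs
    obtain ⟨v, ⟨y, hy, hfy⟩, hgv⟩ := hs
    have hex : ∃ y ∈ Y, f y = v := ⟨y, hy, hfy⟩
    rw [hg] at hgv
    simp only [dif_pos hex] at hgv
    rw [← hgv]
    exact hex.choose_spec.1
  · have h1 : ((Y.image f).image g).card ≤ (Y.image f).card := Finset.card_image_le
    have h2 : Y.image f ⊆ Finset.Icc (-1 : ℤ) K ×ˢ Finset.Icc (-1 : ℤ) K := by
      intro v hv
      simp only [Finset.mem_image] at hv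
      obtain ⟨y, hy, hfy⟩ := hv
      rw [← hfy, Finset.mem_product]
      exact ⟨hcell_mem _ (hY y hy).1, hcell_mem _ (hY y hy).2⟩
    have h3 : (Y.image f).card ≤ ((K + 2).toNat) ^ 2 := by
      have := Finset.card_le_card h2
      rwa [Finset.card_product, Int.card_Icc, show K + 1 - -1 = K + 2 by ring, ← pow_two] at this
    have h4 : ((K + 2).toNat : ℤ) = K + 2 := Int.toNat_of_nonneg (by omega)
    have h5 : (((Y.image f).image g).card : ℤ) ≤ ((K + 2).toNat : ℤ) ^ 2 := by
      exact_mod_cast h1.trans h3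
    rwa [h4] at h5
  · intro y hy
    have hex : ∃ z ∈ Y, f z = f y := ⟨y, hy, rfl⟩
    refine ⟨g (f y), ?_, ?_, ?_⟩
    · exact Finset.mem_image.mpr ⟨f y, Finset.mem_image.mpr ⟨y, hy, rfl⟩, rfl⟩
    all_goals {
      have hgv : g (f y) = hex.choose := dif_pos hex
      have hfz : f hex.choose = f y := hex.choose_spec.2
      rw [hgv]
      first
      | exact hcell_approx _ _ (congrArg Prod.fst hfz)
      | exact hcell_approx _ _ (congrArg Prod.snd hfz)
    }
end

section
/- Let T be a series-parallel term with m leaves in which every leaf has interdiction cost c = 1, let U ≥ 1 be the maximum over all leaves of the two capacities u¹, u², let B ∈ ℕ be the interdiction budget, and let ε > 0. Then there exists a set 𝒜 of interdiction strategies for T, each of cost at most B, with |𝒜| ≤ (⌈log_{1+ε}(m·U)⌉ + 2)², such that for every interdiction strategy γ for T with cost(T,γ) ≤ B there exists γ' ∈ 𝒜 with val(T,γ') componentwise less than or equal to (1+ε)·val(T,γ). In particular, for BMFNI on two-terminal series-parallel graphs with unit interdiction costs there is, for every ε > 0, an ε-approximation of the set of nondominated points whose size is polynomial in m and log U and 1/ε.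 -/
/-- The number of leaves (arcs) of a series-parallel term. -/
def SPTerm.numLeaves : SPTerm → ℕ
  | .leaf _ _ _ => 1
  | .parallel T1 T2 => T1.numLeaves + T2.numLeaves
  | .series T1 T2 => T1.numLeaves + T2.numLeaves

/-- The maximum over all leaves of the two capacities. -/
def SPTerm.maxCap : SPTerm → ℕ
  | .leaf u1 u2 _ => max u1 u2
  | .parallel T1 T2 => max T1.maxCap T2.maxCap
  | .series T1 T2 => max T1.maxCap T2.maxCap

/-- Every leaf has interdiction cost `1`. -/
def SPTerm.unitCosts : SPTerm → Prop
  | .leaf _ _ c => c = 1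
  | .parallel T1 T2 => T1.unitCosts ∧ T2.unitCosts
  | .series T1 T2 => T1.unitCosts ∧ T2.unitCosts

/-!
Sort every flow value `v` into the bucket `⌈log_{1+ε} v⌉`, with a separate bucket for `0`.
Two positive values in the same bucket differ by a factor less than `1 + ε`, and since all values
lie in `{0, …, m·U}` there are `⌈log_{1+ε}(m·U)⌉ + 2` buckets per coordinate. Keeping one
feasible strategy for each occupied pair of buckets gives the approximating set.
-/

open Real

theorem SPval_le_numLeaves_mul_maxCap : ∀ {T : SPTerm} (γ : SPStrat T),
    (SPval γ).1 ≤ T.numLeaves * T.maxCap ∧ (SPval γ).2 ≤ T.numLeaves * T.maxCap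
  | _, .leaf u1 u2 c b => by cases b <;> simp [SPval, SPTerm.numLeaves, SPTerm.maxCap]
  | _, .parallel (T1 := T1) (T2 := T2) γ1 γ2 => by
      obtain ⟨h11, h12⟩ := SPval_le_numLeaves_mul_maxCap γ1
      obtain ⟨h21, h22⟩ := SPval_le_numLeaves_mul_maxCap γ2
      have hM1 : T1.maxCap ≤ max T1.maxCap T2.maxCap := le_max_left _ _
      have hM2 : T2.maxCap ≤ max T1.maxCap T2.maxCap := le_max_right _ _
      simp only [SPval, SPTerm.numLeaves, SPTerm.maxCap, Prod.fst_add, Prod.snd_add, add_mul]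
      constructor <;> nlinarith
  | _, .series (T1 := T1) (T2 := T2) γ1 γ2 => by
      obtain ⟨h11, h12⟩ := SPval_le_numLeaves_mul_maxCap γ1
      have hM : T1.numLeaves * T1.maxCap ≤
          (T1.numLeaves + T2.numLeaves) * max T1.maxCap T2.maxCap :=
        Nat.mul_le_mul (Nat.le_add_right _ _) (le_max_left _ _)
      simp only [SPval, SPTerm.numLeaves, SPTerm.maxCap]
      constructor <;> omega

theorem lt_mul_of_natCeil_logb_eq {q x y : ℝ} (hq : 1 < q) (hx : 1 ≤ x) (hy : 0 < y)
    (h : ⌈logb q y⌉₊ = ⌈logb q x⌉₊) : y < q * x := by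
  rw [← logb_lt_logb_iff hq hy (by positivity), logb_mul (by positivity) (by positivity),
    logb_self_eq_one hq, add_comm]
  calc logb q y ≤ ⌈logb q y⌉₊ := Nat.le_ceil _
    _ = ⌈logb q x⌉₊ := by rw [h]
    _ < logb q x + 1 := Nat.ceil_lt_add_one (logb_nonneg hq hx)

/-- `0` gets a bucket of its own: `logb q 0 = logb q 1 = 0`. -/
noncomputable def logBucket (q : ℝ) (v : ℕ) : ℕ :=
  if v = 0 then 0 else ⌈logb q v⌉₊ + 1

theorem le_mul_of_logBucket_eq {q : ℝ} (hq : 1 < q) {a b : ℕ}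
    (h : logBucket q b = logBucket q a) : (b : ℝ) ≤ q * a := by
  rcases Nat.eq_zero_or_pos b with rfl | hb
  · simp only [Nat.cast_zero]
    positivity
  rcases Nat.eq_zero_or_pos a with rfl | ha
  · simp [logBucket, hb.ne'] at h
  simp only [logBucket, hb.ne', ha.ne', if_false, add_left_inj] at h
  exact (lt_mul_of_natCeil_logb_eq hq (by exact_mod_cast ha) (by exact_mod_cast hb) h).le

theorem logBucket_lt {q : ℝ} (hq : 1 < q) {v n : ℕ} (hv : v ≤ n) :
    logBucket q v < ⌈logb q n⌉₊ + 2 := by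
  unfold logBucket
  split_ifs with hv0
  · omega
  · have hvn : logb q v ≤ logb q n :=
      logb_le_logb_of_le hq (by positivity) (by exact_mod_cast hv)
    have := Nat.ceil_mono hvn
    omega

theorem exists_subset_logBucket_approx {α : Type*} (S : Set α) (f : α → ℕ × ℕ) {q : ℝ}
    (hq : 1 < q) {n : ℕ} (hf : ∀ x ∈ S, (f x).1 ≤ n ∧ (f x).2 ≤ n) :
    ∃ A ⊆ S, A.Finite ∧ A.ncard ≤ (⌈logb q n⌉₊ + 2) ^ 2 ∧
      ∀ x ∈ S, ∃ y ∈ A, ((f y).1 : ℝ) ≤ q * (f x).1 ∧ ((f y).2 : ℝ) ≤ q * (f x).2 := by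
  set φ : α → ℕ × ℕ := fun x => (logBucket q (f x).1, logBucket q (f x).2)
  set R := Finset.range (⌈logb q n⌉₊ + 2)
  obtain ⟨A, hAS, hbij⟩ := Set.exists_subset_bijOn S φ
  have hrange : φ '' S ⊆ ↑(R ×ˢ R) := by
    rintro _ ⟨x, hx, rfl⟩
    simp only [R, φ, Finset.coe_product, Set.mem_prod, Finset.mem_coe, Finset.mem_range]
    exact ⟨logBucket_lt hq (hf x hx).1, logBucket_lt hq (hf x hx).2⟩
  have hcard : A.ncard = (φ '' S).ncard := by
    rw [← hbij.image_eq, hbij.injOn.ncard_image]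
  refine ⟨A, hAS, ?_, ?_, fun x hx => ?_⟩
  · exact Set.Finite.of_finite_image (hbij.image_eq ▸ (R ×ˢ R).finite_toSet.subset hrange)
      hbij.injOn
  · calc A.ncard = (φ '' S).ncard := hcard
      _ ≤ (↑(R ×ˢ R) : Set (ℕ × ℕ)).ncard := Set.ncard_le_ncard hrange (Finset.finite_toSet _)
      _ = (⌈logb q n⌉₊ + 2) ^ 2 := by simp [R, sq]
  · obtain ⟨y, hyA, hφ⟩ := hbij.surjOn ⟨x, hx, rfl⟩
    simp only [φ, Prod.mk.injEq] at hφ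
    exact ⟨y, hyA, le_mul_of_logBucket_eq hq hφ.1, le_mul_of_logBucket_eq hq hφ.2⟩

theorem stmt19_general (T : SPTerm)
    (U : ℕ) (hU : U = T.maxCap) (B : ℕ) (ε : ℝ) (hε : 0 < ε) :
    ∃ 𝒜 : Set (SPStrat T), 𝒜.Finite ∧
      (∀ γ' ∈ 𝒜, SPcost γ' ≤ B) ∧
      (𝒜.ncard : ℤ) ≤ (⌈Real.logb (1 + ε) ((T.numLeaves * U : ℕ) : ℝ)⌉ + 2) ^ 2 ∧
      ∀ γ : SPStrat T, SPcost γ ≤ B → ∃ γ' ∈ 𝒜,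
        ((SPval γ').1 : ℝ) ≤ (1 + ε) * ((SPval γ).1 : ℝ) ∧
        ((SPval γ').2 : ℝ) ≤ (1 + ε) * ((SPval γ).2 : ℝ) := by
  have hq : 1 < 1 + ε := by linarith
  obtain ⟨𝒜, h𝒜B, h𝒜fin, hcard, happrox⟩ :=
    exists_subset_logBucket_approx {γ : SPStrat T | SPcost γ ≤ B} SPval hq
      (n := T.numLeaves * U) fun γ _ => hU ▸ SPval_le_numLeaves_mul_maxCap γ
  refine ⟨𝒜, h𝒜fin, h𝒜B, ?_, happrox⟩
  have hlog : 0 ≤ logb (1 + ε) ((T.numLeaves * U : ℕ) : ℝ) :=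
    div_nonneg (log_natCast_nonneg _) (log_nonneg hq.le)
  rw [← Int.natCast_ceil_eq_ceil hlog]
  exact_mod_cast hcard

theorem stmt19 (T : SPTerm) (hT : T.unitCosts)
    (U : ℕ) (hU : U = T.maxCap) (hU1 : 1 ≤ U) (B : ℕ) (ε : ℝ) (hε : 0 < ε) :
    ∃ 𝒜 : Set (SPStrat T), 𝒜.Finite ∧
      (∀ γ' ∈ 𝒜, SPcost γ' ≤ B) ∧
      (𝒜.ncard : ℤ) ≤ (⌈Real.logb (1 + ε) ((T.numLeaves * U : ℕ) : ℝ)⌉ + 2) ^ 2 ∧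
      ∀ γ : SPStrat T, SPcost γ ≤ B → ∃ γ' ∈ 𝒜,
        ((SPval γ').1 : ℝ) ≤ (1 + ε) * ((SPval γ).1 : ℝ) ∧
        ((SPval γ').2 : ℝ) ≤ (1 + ε) * ((SPval γ).2 : ℝ) :=
  stmt19_general T U hU B ε hε
end
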